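/- arXiv:math/0404516 — 4 statements merged into one kernel-verified Lean document; each statement's English description precedes it below -/
import Mathlib

section
/- Let G be a graph and Δ(G) its clique complex. A cycle in G generates a nontrivial element of the first simplicial homology of Δ(G) only if G contains a minimal cycle (a chordless cycle of length > 3). In particular, if every cycle of G of length > 3 has a chord (G is chordal), then the first reduced simplicial homology of Δ(G) with coefficients in any field k vanishes. -/
attribute [local instance] Classical.propDecidable

/-- An abstract simplicial complex on vertex type `V`. -/
structure SComplex (V : Type) [DecidableEq V] where
  faces : Set (Finset V)
  empty_mem : ∅ ∈ faces
  down_closed : ∀ {s t : Finset V}, s ∈ faces → t ⊆ s → t ∈ faces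

variable {V : Type} [DecidableEq V]

/-- The full subcomplex of `Δ` on a vertex set `W`: all faces contained in `W`. -/
def SComplex.fullSub (Δ : SComplex V) (W : Set V) : SComplex V where
  faces := {s | s ∈ Δ.faces ∧ ↑s ⊆ W}
  empty_mem := ⟨Δ.empty_mem, by simp⟩
  down_closed := fun hs hts =>
    ⟨Δ.down_closed hs.1 hts, Set.Subset.trans (Finset.coe_subset.mpr hts) hs.2⟩

variable [Fintype V] [LinearOrder V]

/-- The space of simplicial `k`-chains of `Δ` supported on faces with `n` vertices
(i.e. of dimension `n-1`); for `n = 0` this is the span of the empty face, so the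
resulting chain complex is the augmented (reduced) one. -/
abbrev SComplex.chain (k : Type) [Field k] (Δ : SComplex V) (n : ℕ) : Type :=
  {F : Finset V // F ∈ Δ.faces ∧ F.card = n} → k

/-- The simplicial boundary operator from chains on faces with `n+1` vertices to
chains on faces with `n` vertices, with the usual alternating signs determined by
the linear order on the vertices. -/
noncomputable def SComplex.bdry (k : Type) [Field k] (Δ : SComplex V) (n : ℕ) :
    Δ.chain k (n+1) →ₗ[k] Δ.chain k n where
  toFun f G := ∑ v : V,
    if h : v ∉ G.1 ∧ insert v G.1 ∈ Δ.faces then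
      (-1 : k) ^ (G.1.filter (fun u => u < v)).card *
        f ⟨insert v G.1, h.2, by rw [Finset.card_insert_of_notMem h.1, G.2.2]⟩
    else 0
  map_add' f g := by
    funext G
    show _ = (_ : k) + _
    rw [← Finset.sum_add_distrib]
    refine Finset.sum_congr rfl fun v _ => ?_
    by_cases h : v ∉ G.1 ∧ insert v G.1 ∈ Δ.faces
    · simp only [dif_pos h, Pi.add_apply]; ring
    · simp [dif_neg h]
  map_smul' c f := by
    funext G
    show _ = c * _
    rw [Finset.mul_sum]
    refine Finset.sum_congr rfl fun v _ => ?_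
    by_cases h : v ∉ G.1 ∧ insert v G.1 ∈ Δ.faces
    · simp only [dif_pos h, Pi.smul_apply, smul_eq_mul]; ring
    · simp [dif_neg h]

/-- The `i`-th reduced simplicial homology of `Δ` with coefficients in `k`:
cycles supported on faces with `i+1` vertices (dimension `i`) modulo boundaries.
(Since chains in degree 0 are spanned by the empty face, this is reduced homology.) -/
abbrev SComplex.redHomology (k : Type) [Field k] (Δ : SComplex V) (i : ℕ) :=
  LinearMap.ker (Δ.bdry k i) ⧸
    Submodule.comap (LinearMap.ker (Δ.bdry k i)).subtype
      (LinearMap.range (Δ.bdry k (i+1)))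
/-- The clique (flag) complex of a graph: faces are the cliques of `G`. -/
def cliqueComplex {V : Type} [DecidableEq V] (G : SimpleGraph V) : SComplex V where
  faces := {s | G.IsClique ↑s}
  empty_mem := by simp
  down_closed := fun hs hts => hs.subset (Finset.coe_subset.mpr hts)

/-- A cycle of length `q` in `G`: distinct vertices `v 0, …, v (q-1)` with
`v i` adjacent to `v (i+1)` (indices mod `q`). -/
def IsGraphCycle {V : Type} (G : SimpleGraph V) {q : ℕ} [NeZero q] (v : Fin q → V) : Prop :=
  Function.Injective v ∧ ∀ i : Fin q, G.Adj (v i) (v (i + 1))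

/-- The cycle `v` has a chord: an edge of `G` between two non-consecutive
vertices of the cycle. -/
def CycleHasChord {V : Type} (G : SimpleGraph V) {q : ℕ} [NeZero q] (v : Fin q → V) : Prop :=
  ∃ i j : Fin q, j ≠ i + 1 ∧ i ≠ j + 1 ∧ G.Adj (v i) (v j)

/-- A minimal cycle: a chordless cycle of length `> 3`. -/
def IsMinimalCycle {V : Type} (G : SimpleGraph V) {q : ℕ} [NeZero q] (v : Fin q → V) : Prop :=
  3 < q ∧ IsGraphCycle G v ∧ ¬ CycleHasChord G v

/-- `G` is chordal: it has no minimal (chordless, length `> 3`) cycle;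
equivalently every cycle of length `> 3` has a chord. -/
def IsChordal {V : Type} (G : SimpleGraph V) : Prop :=
  ∀ (q : ℕ) (v : Fin (q + 1) → V), ¬ IsMinimalCycle G v


/-!
Write `γ x` for the chain of a walk from a fixed root of the connected component of `x` to `x`,
and let `P` be the linear map sending the vertex `x` to `γ x`. For an edge `[a, b]`,
`[a, b] - P (∂ [a, b]) = γ a + [a, b] - γ b` is the chain of a closed walk, so for a 1-cycle `z`
the chain `z = z - P (∂ z)` is a combination of chains of closed walks. It therefore suffices
that the chain of every closed walk is a boundary. By induction on the length: if two cyclically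
non-consecutive positions of the walk carry equal or adjacent vertices, the walk splits into two
shorter closed walks whose chains add up to the original one; otherwise the walk is a chordless
cycle, so by chordality it has length at most 3: its chain is zero or the boundary of a 2-simplex
of `Δ(G)`.
-/

theorem LinearMap.ker_le_of_forall_single_sub_mem {R ι M : Type*} [Ring R] [Fintype ι]
    [DecidableEq ι] [AddCommGroup M] [Module R M] (d : (ι → R) →ₗ[R] M) (P : M →ₗ[R] ι → R)
    (B : Submodule R (ι → R)) (h : ∀ i, Pi.single i 1 - P (d (Pi.single i 1)) ∈ B) :
    LinearMap.ker d ≤ B := by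
  intro z hz
  have hz' : z = (LinearMap.id - P ∘ₗ d : (ι → R) →ₗ[R] ι → R) (∑ i, z i • Pi.single i 1) := by
    simp only [← Pi.single_smul, smul_eq_mul, mul_one, Finset.univ_sum_single]
    simp [LinearMap.mem_ker.mp hz]
  rw [hz', map_sum]
  exact B.sum_mem fun i _ => by simpa using B.smul_mem (z i) (h i)

namespace SComplex

variable (k : Type) [Field k] (Δ : SComplex V)

section

omit [Fintype V] [LinearOrder V]

noncomputable def faceChain (n : ℕ) (σ : Finset V) : Δ.chain k n :=
  fun F => if F.1 = σ then 1 else 0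

theorem faceChain_val {n : ℕ} (F : {F : Finset V // F ∈ Δ.faces ∧ F.card = n}) :
    Δ.faceChain k n F.1 = Pi.single F 1 := by
  funext F'
  simp [faceChain, Pi.single_apply, Subtype.ext_iff]

theorem faceChain_of_card_ne {n : ℕ} {σ : Finset V} (h : σ.card ≠ n) : Δ.faceChain k n σ = 0 := by
  funext F
  exact if_neg fun hF => h (by rw [← hF, F.2.2])

end

theorem bdry_faceChain {n : ℕ} {σ : Finset V} (hσ : σ ∈ Δ.faces) :
    Δ.bdry k n (Δ.faceChain k (n + 1) σ) =
      ∑ v ∈ σ, (-1 : k) ^ ((σ.erase v).filter (· < v)).card • Δ.faceChain k n (σ.erase v) := by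
  funext F
  have hterm : ∀ v : V, (if h : v ∉ F.1 ∧ insert v F.1 ∈ Δ.faces then
      (-1 : k) ^ (F.1.filter (· < v)).card * Δ.faceChain k (n + 1) σ
        ⟨insert v F.1, h.2, by rw [Finset.card_insert_of_notMem h.1, F.2.2]⟩ else 0) =
      if v ∈ σ ∧ F.1 = σ.erase v then (-1 : k) ^ ((σ.erase v).filter (· < v)).card else 0 := by
    intro v
    have hiff : v ∉ F.1 ∧ insert v F.1 = σ ↔ v ∈ σ ∧ F.1 = σ.erase v := by
      constructor
      · rintro ⟨hv, rfl⟩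
        exact ⟨Finset.mem_insert_self v _, (Finset.erase_insert hv).symm⟩
      · rintro ⟨hv, hF⟩
        rw [hF]
        exact ⟨Finset.notMem_erase v σ, Finset.insert_erase hv⟩
    by_cases h : v ∈ σ ∧ F.1 = σ.erase v
    · obtain ⟨hv, hins⟩ := hiff.mpr h
      rw [if_pos h, dif_pos ⟨hv, hins ▸ hσ⟩, ← h.2]
      simp [faceChain, hins]
    · rw [if_neg h]
      split_ifs with h'
      · simp only [faceChain, mul_ite, mul_one, mul_zero]
        exact if_neg fun h'' => h (hiff.mp ⟨h'.1, h''⟩)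
      · rfl
  change ∑ v : V, _ = _
  rw [Finset.sum_congr rfl fun v _ => hterm v]
  simp only [Finset.sum_apply, Pi.smul_apply, smul_eq_mul, faceChain, mul_ite, mul_one, mul_zero,
    ite_and, Finset.sum_ite_mem, Finset.univ_inter]

section

omit [Fintype V]

/-- Vanishes for `a = b`, since `{a, a} = {a}` is not a face with two vertices. -/
noncomputable def edgeChain (a b : V) : Δ.chain k 2 :=
  if a < b then Δ.faceChain k 2 {a, b} else -Δ.faceChain k 2 {a, b}

theorem edgeChain_self (a : V) : Δ.edgeChain k a a = 0 := by
  simp [edgeChain, faceChain_of_card_ne]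

theorem edgeChain_swap (a b : V) : Δ.edgeChain k b a = -Δ.edgeChain k a b := by
  rcases lt_trichotomy a b with h | rfl | h
  · simp [edgeChain, h, h.not_gt, Finset.pair_comm]
  · simp [edgeChain_self]
  · simp [edgeChain, h, h.not_gt, Finset.pair_comm]

noncomputable def pathChain : List V → Δ.chain k 2
  | a :: b :: l => Δ.edgeChain k a b + pathChain (b :: l)
  | _ => 0

@[simp] theorem pathChain_nil : Δ.pathChain k [] = 0 := rfl

@[simp] theorem pathChain_singleton (a : V) : Δ.pathChain k [a] = 0 := rfl

@[simp] theorem pathChain_cons_cons (a b : V) (l : List V) :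
    Δ.pathChain k (a :: b :: l) = Δ.edgeChain k a b + Δ.pathChain k (b :: l) := rfl

theorem pathChain_append (l₁ : List V) (a : V) (l₂ : List V) :
    Δ.pathChain k (l₁ ++ a :: l₂) = Δ.pathChain k (l₁ ++ [a]) + Δ.pathChain k (a :: l₂) := by
  induction l₁ with
  | nil => simp
  | cons x l₁ ih =>
    cases l₁ with
    | nil => simp
    | cons y l₁ =>
      simp only [List.cons_append, pathChain_cons_cons] at ih ⊢
      rw [ih, add_assoc]

theorem pathChain_append_of_getLast?_of_head? {l₁ l₂ : List V} {a b : V}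
    (h₁ : l₁.getLast? = some a) (h₂ : l₂.head? = some b) :
    Δ.pathChain k (l₁ ++ l₂) = Δ.pathChain k l₁ + Δ.edgeChain k a b + Δ.pathChain k l₂ := by
  obtain ⟨l₁, rfl⟩ := List.getLast?_eq_some_iff.mp h₁
  obtain ⟨l₂, rfl⟩ := List.head?_eq_some_iff.mp h₂
  rw [List.append_assoc, List.singleton_append, pathChain_append, pathChain_cons_cons, add_assoc]

theorem pathChain_reverse (l : List V) : Δ.pathChain k l.reverse = -Δ.pathChain k l := by
  induction l with
  | nil => simp
  | cons a l ih =>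
    cases l with
    | nil => simp
    | cons b l =>
      rw [List.reverse_cons, List.reverse_cons, List.append_assoc, List.singleton_append,
        pathChain_append, ← List.reverse_cons, ih]
      simp [edgeChain_swap k Δ a b, add_comm]

theorem pathChain_split_of_eq (l₁ l₂ l₃ : List V) (a : V) :
    Δ.pathChain k (l₁ ++ a :: (l₂ ++ a :: l₃)) =
      Δ.pathChain k (a :: (l₂ ++ [a])) + Δ.pathChain k (l₁ ++ a :: l₃) := by
  rw [pathChain_append k Δ l₁ a, pathChain_append k Δ l₁ a l₃, ← List.cons_append,
    pathChain_append k Δ (a :: l₂) a l₃, List.cons_append]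
  abel

theorem pathChain_split_of_adj (l₁ l₂ l₃ : List V) (a b : V) :
    Δ.pathChain k (l₁ ++ a :: (l₂ ++ b :: l₃)) =
      Δ.pathChain k (a :: (l₂ ++ [b, a])) + Δ.pathChain k (l₁ ++ a :: b :: l₃) := by
  rw [pathChain_append k Δ l₁ a, pathChain_append k Δ l₁ a (b :: l₃), ← List.cons_append,
    pathChain_append k Δ (a :: l₂) b l₃, ← List.cons_append, pathChain_append k Δ (a :: l₂) b [a],
    pathChain_cons_cons, pathChain_cons_cons, pathChain_singleton, edgeChain_swap k Δ a b]
  abel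

end

theorem bdry_edgeChain_of_lt {a b : V} (hab : a < b) (h : {a, b} ∈ Δ.faces) :
    Δ.bdry k 1 (Δ.edgeChain k a b) = Δ.faceChain k 1 {b} - Δ.faceChain k 1 {a} := by
  rw [edgeChain, if_pos hab, bdry_faceChain k Δ h]
  simp [Finset.sum_pair hab.ne, hab.ne, Finset.erase_insert_of_ne, Finset.filter_singleton,
    hab, hab.not_gt, sub_eq_add_neg]

theorem bdry_edgeChain {a b : V} (h : {a, b} ∈ Δ.faces) :
    Δ.bdry k 1 (Δ.edgeChain k a b) = Δ.faceChain k 1 {b} - Δ.faceChain k 1 {a} := by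
  rcases lt_trichotomy a b with hab | rfl | hab
  · exact bdry_edgeChain_of_lt k Δ hab h
  · simp [edgeChain_self]
  · rw [edgeChain_swap, map_neg, bdry_edgeChain_of_lt k Δ hab (Finset.pair_comm a b ▸ h), neg_sub]

theorem bdry_faceChain_triple {x y z : V} (hxy : x < y) (hyz : y < z) (h : {x, y, z} ∈ Δ.faces) :
    Δ.bdry k 2 (Δ.faceChain k 3 {x, y, z}) =
      Δ.edgeChain k x y + Δ.edgeChain k y z + Δ.edgeChain k z x := by
  have hxz := hxy.trans hyz
  rw [bdry_faceChain k Δ h]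
  simp [Finset.sum_insert, hxy.ne, hxz.ne, hxy.ne', hyz.ne', edgeChain, hxy, hyz, hxz,
    hxy.not_gt, hyz.not_gt, hxz.not_gt, Finset.filter_insert, Finset.filter_singleton,
    Finset.erase_insert_of_ne, Finset.pair_comm]
  abel

theorem edgeChain_add_add_mem_range {a b c : V} (hab : a ≠ b) (hbc : b ≠ c) (hca : c ≠ a)
    (h : {a, b, c} ∈ Δ.faces) :
    Δ.edgeChain k a b + Δ.edgeChain k b c + Δ.edgeChain k c a ∈ LinearMap.range (Δ.bdry k 2) := by
  have sorted : ∀ {x y z : V}, x < y → y < z → {x, y, z} ∈ Δ.faces →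
      Δ.edgeChain k x y + Δ.edgeChain k y z + Δ.edgeChain k z x ∈
        LinearMap.range (Δ.bdry k 2) :=
    fun hxy hyz hF => ⟨_, bdry_faceChain_triple k Δ hxy hyz hF⟩
  have reversed : ∀ {x y z : V}, x < y → y < z → {x, y, z} ∈ Δ.faces →
      Δ.edgeChain k z y + Δ.edgeChain k y x + Δ.edgeChain k x z ∈
        LinearMap.range (Δ.bdry k 2) := by
    intro x y z hxy hyz hF
    convert neg_mem (sorted hxy hyz hF) using 1
    rw [edgeChain_swap k Δ y z, edgeChain_swap k Δ x y, edgeChain_swap k Δ z x]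
    abel
  have face : ∀ {x y z : V}, ({a, b, c} : Finset V) = {x, y, z} → {x, y, z} ∈ Δ.faces :=
    fun e => e ▸ h
  obtain hab' | hab' := hab.lt_or_gt <;> obtain hbc' | hbc' := hbc.lt_or_gt <;>
    obtain hca' | hca' := hca.lt_or_gt
  · exact absurd (hab'.trans hbc') hca'.not_gt
  · exact sorted hab' hbc' h
  · convert sorted hca' hab' (face (by ext; simp; tauto)) using 1
    abel
  · convert reversed hca' hbc' (face (by ext; simp; tauto)) using 1
    abel
  · convert sorted hbc' hca' (face (by ext; simp; tauto)) using 1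
    abel
  · convert reversed hab' hca' (face (by ext; simp; tauto)) using 1
    abel
  · convert reversed hbc' hab' (face (by ext; simp; tauto)) using 1
  · exact absurd (hbc'.trans hab') hca'.not_gt

end SComplex

theorem List.eq_append_getElem_cons_append_getElem_cons {α : Type*} (L : List α) {i j : ℕ}
    (hij : i < j) (hj : j < L.length) :
    L = L.take i ++ L[i] :: ((L.drop (i + 1)).take (j - i - 1) ++ L[j] :: L.drop (j + 1)) := by
  have hdrop : (L.drop (i + 1)).drop (j - i - 1) = L.drop j := by
    rw [List.drop_drop]
    congr 1
    omega
  rw [List.getElem_cons_drop, ← hdrop, List.take_append_drop, List.getElem_cons_drop,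
    List.take_append_drop]

section ClosedWalk

omit [DecidableEq V] [Fintype V] [LinearOrder V]

variable {G : SimpleGraph V}

theorem SimpleGraph.Reachable.exists_isChain {u v : V} (h : G.Reachable u v) :
    ∃ L : List V, L.IsChain G.Adj ∧ L.head? = some u ∧ L.getLast? = some v := by
  obtain ⟨p⟩ := h
  refine ⟨p.support, p.isChain_adj_support, ?_, ?_⟩
  · rw [← p.cons_tail_support]
    rfl
  · rw [List.getLast?_eq_some_getLast p.support_ne_nil, p.getLast_support]

/-- A closed walk, listed with its starting vertex repeated at the end. -/
def IsClosedWalk (G : SimpleGraph V) (L : List V) : Prop :=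
  L.IsChain G.Adj ∧ L.head? = L.getLast?

/-- Two positions of the closed walk `L` that are not consecutive modulo its length carry equal or
adjacent vertices `a` and `b`. -/
def HasShortcut (G : SimpleGraph V) (L : List V) : Prop :=
  ∃ l₁ a l₂ b l₃, L = l₁ ++ a :: (l₂ ++ b :: l₃) ∧ l₂ ≠ [] ∧ 2 ≤ l₁.length + l₃.length ∧
    (a = b ∨ G.Adj a b)

theorem hasShortcut_of_getElem {L : List V} {i j : ℕ} (hij : i + 2 ≤ j) (hj : j < L.length)
    (hji : j + 3 ≤ i + L.length) (h : L[i] = L[j] ∨ G.Adj L[i] L[j]) : HasShortcut G L := by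
  refine ⟨_, _, _, _, _, L.eq_append_getElem_cons_append_getElem_cons (by omega) hj, ?_, ?_, h⟩
  · rw [← List.length_pos_iff]
    simp only [List.length_take, List.length_drop]
    omega
  · simp only [List.length_take, List.length_drop]
    omega

theorem IsClosedWalk.getElem_last {L : List V} (hL : IsClosedWalk G L) {q : ℕ}
    (hq : L.length = q + 2) : L[q + 1] = L[0] := by
  have := hL.2
  rw [List.head?_eq_getElem?, List.getLast?_eq_getElem?] at this
  simp [hq] at this
  exact this.symm

theorem IsClosedWalk.isMinimalCycle {L : List V} (hL : IsClosedWalk G L) (hs : ¬HasShortcut G L)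
    {q : ℕ} (hq : L.length = q + 2) (hq3 : 3 ≤ q) :
    IsMinimalCycle G (fun i : Fin (q + 1) => L[i.val]) := by
  set v := fun i : Fin (q + 1) => L[i.val]
  have hadj : ∀ i, G.Adj (v i) (v (i + 1)) := by
    intro i
    rcases (Fin.le_last i).lt_or_eq with hi | rfl
    · simp only [v, Fin.val_add_one_of_lt hi]
      exact hL.1.getElem _ _
    · simp only [v, Fin.last_add_one, Fin.val_last, Fin.val_zero, ← hL.getElem_last hq]
      exact hL.1.getElem _ _
  have far : ∀ i j : Fin (q + 1), i < j → j ≠ i + 1 → i ≠ j + 1 →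
      ¬(v i = v j ∨ G.Adj (v i) (v j)) := by
    intro i j hij hj hi h
    have hij' : i.val < j.val := hij
    have hjq := j.isLt
    refine hs (hasShortcut_of_getElem ?_ (by omega) ?_ h)
    · by_contra hlt
      apply hj
      ext
      rw [Fin.val_add_one_of_lt (hij.trans_le (Fin.le_last j))]
      omega
    · by_contra hlt
      apply hi
      have hj' : j = Fin.last q := Fin.ext (by rw [Fin.val_last]; omega)
      have hi' : i = 0 := Fin.ext (by rw [Fin.val_zero]; omega)
      rw [hj', hi', Fin.last_add_one]
  have ne_succ : ∀ i j, v i = v j → j ≠ i + 1 := fun i j h hj => (hadj i).ne (by rw [h, hj])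
  have ne_of_lt : ∀ i j, i < j → v i ≠ v j := fun i j hij h =>
    far i j hij (ne_succ i j h) (ne_succ j i h.symm) (Or.inl h)
  refine ⟨by omega, ⟨fun i j h => ?_, hadj⟩, ?_⟩
  · exact le_antisymm (not_lt.mp fun hji => ne_of_lt j i hji h.symm)
      (not_lt.mp fun hij => ne_of_lt i j hij h)
  · rintro ⟨i, j, hj, hi, h⟩
    rcases lt_trichotomy i j with hij | rfl | hji
    · exact far i j hij hj hi (Or.inr h)
    · exact h.ne rfl
    · exact far j i hji hi hj (Or.inr h.symm)

end ClosedWalk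

section CliqueComplex

variable {G : SimpleGraph V} (k : Type) [Field k]

omit [Fintype V] [LinearOrder V] in
theorem cliqueComplex_singleton_mem (G : SimpleGraph V) (a : V) :
    {a} ∈ (cliqueComplex G).faces := by
  simp [cliqueComplex]

omit [Fintype V] [LinearOrder V] in
theorem cliqueComplex_triple_mem {a b c : V} (hab : G.Adj a b) (hbc : G.Adj b c)
    (hca : G.Adj c a) : {a, b, c} ∈ (cliqueComplex G).faces :=
  (SimpleGraph.is3Clique_triple_iff.mpr ⟨hab, hca.symm, hbc⟩).isClique

omit [Fintype V] in
theorem IsClosedWalk.split {L : List V} (hL : IsClosedWalk G L) (hs : HasShortcut G L) :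
    ∃ L₁ L₂, IsClosedWalk G L₁ ∧ IsClosedWalk G L₂ ∧ L₁.length < L.length ∧
      L₂.length < L.length ∧
      (cliqueComplex G).pathChain k L =
        (cliqueComplex G).pathChain k L₁ + (cliqueComplex G).pathChain k L₂ := by
  obtain ⟨l₁, a, l₂, b, l₃, rfl, hne, hl₁₃, rfl | hab⟩ := hs
  all_goals
    obtain ⟨hchain, hclosed⟩ := hL
    obtain ⟨hc₁, hchain⟩ := List.isChain_split.mp hchain
    obtain ⟨hc₂, hc₃⟩ := (List.isChain_split (l₁ := a :: l₂)).mp hchain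
    have hlen := List.length_pos_of_ne_nil hne
  · refine ⟨a :: (l₂ ++ [a]), l₁ ++ a :: l₃, ⟨hc₂, by simp [List.getLast?_cons]⟩,
      ⟨List.isChain_split.mpr ⟨hc₁, hc₃⟩, by simpa [List.getLast?_cons] using hclosed⟩, ?_, ?_,
      SComplex.pathChain_split_of_eq _ _ _ _ _ _⟩ <;>
    simp only [List.length_append, List.length_cons, List.length_nil] <;> omega
  · refine ⟨a :: (l₂ ++ [b, a]), l₁ ++ a :: b :: l₃,
      ⟨(List.isChain_split (l₁ := a :: l₂)).mpr ⟨hc₂, by simpa using hab.symm⟩,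
        by simp [List.getLast?_cons]⟩,
      ⟨List.isChain_split.mpr ⟨hc₁, List.isChain_cons_cons.mpr ⟨hab, hc₃⟩⟩,
        by simpa [List.getLast?_cons] using hclosed⟩, ?_, ?_,
      SComplex.pathChain_split_of_adj _ _ _ _ _ _ _⟩ <;>
    simp only [List.length_append, List.length_cons, List.length_nil] <;> omega

theorem IsClosedWalk.pathChain_mem_range_of_length_le {L : List V} (hL : IsClosedWalk G L)
    (hlen : L.length ≤ 4) :
    (cliqueComplex G).pathChain k L ∈ LinearMap.range ((cliqueComplex G).bdry k 2) := by
  obtain ⟨hchain, hclosed⟩ := hL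
  rcases L with _ | ⟨x, _ | ⟨y, _ | ⟨z, _ | ⟨w, _ | ⟨u, L⟩⟩⟩⟩⟩
  · simp
  · simp
  · simp at hchain hclosed
    exact absurd hclosed hchain.ne
  · simp at hchain hclosed
    subst hclosed
    simp [SComplex.edgeChain_swap k _ x y]
  · simp at hchain hclosed
    subst hclosed
    obtain ⟨hxy, hyz, hzx⟩ := hchain
    simpa [add_assoc] using SComplex.edgeChain_add_add_mem_range k _ hxy.ne hyz.ne hzx.ne
      (cliqueComplex_triple_mem hxy hyz hzx)
  · simp at hlen
    omega

theorem IsClosedWalk.pathChain_mem_range (hG : IsChordal G) {L : List V}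
    (hL : IsClosedWalk G L) :
    (cliqueComplex G).pathChain k L ∈ LinearMap.range ((cliqueComplex G).bdry k 2) := by
  induction hn : L.length using Nat.strong_induction_on generalizing L with
  | _ n ih =>
    by_cases hs : HasShortcut G L
    · obtain ⟨L₁, L₂, hL₁, hL₂, hlt₁, hlt₂, hsplit⟩ := hL.split k hs
      rw [hsplit]
      exact add_mem (ih _ (hn ▸ hlt₁) hL₁ rfl) (ih _ (hn ▸ hlt₂) hL₂ rfl)
    · by_cases hlen : L.length ≤ 4
      · exact hL.pathChain_mem_range_of_length_le k hlen
      · obtain ⟨q, hq⟩ : ∃ q, L.length = q + 2 := ⟨L.length - 2, by omega⟩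
        exact absurd (hL.isMinimalCycle hs hq (by omega)) (hG q _)

theorem pathChain_add_edgeChain_sub_mem_range (hG : IsChordal G) {a b r : V} (hab : G.Adj a b)
    {La Lb : List V} (hLa : La.IsChain G.Adj) (hLb : Lb.IsChain G.Adj) (hha : La.head? = some r)
    (hhb : Lb.head? = some r) (hla : La.getLast? = some a) (hlb : Lb.getLast? = some b) :
    (cliqueComplex G).pathChain k La + (cliqueComplex G).edgeChain k a b -
        (cliqueComplex G).pathChain k Lb ∈ LinearMap.range ((cliqueComplex G).bdry k 2) := by
  have hclosed : IsClosedWalk G (La ++ Lb.reverse) := by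
    refine ⟨List.isChain_append.mpr ⟨hLa, List.isChain_reverse.mpr (hLb.imp
      fun _ _ h => h.symm), ?_⟩, ?_⟩
    · simp [hla, List.head?_reverse, hlb, hab]
    · simp [List.head?_append, hha, List.getLast?_append, hhb]
  have hmem := hclosed.pathChain_mem_range k hG
  rwa [SComplex.pathChain_append_of_getLast?_of_head? k _ hla (by rw [List.head?_reverse, hlb]),
    SComplex.pathChain_reverse, ← sub_eq_add_neg] at hmem

theorem ker_bdry_le_range_bdry (hG : IsChordal G) :
    LinearMap.ker ((cliqueComplex G).bdry k 1) ≤ LinearMap.range ((cliqueComplex G).bdry k 2) := by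
  set Δ := cliqueComplex G
  let root : V → V := fun x => Quot.out (G.connectedComponentMk x)
  choose L hchain hhead hlast using fun x =>
    (SimpleGraph.ConnectedComponent.exact (Quot.out_eq (G.connectedComponentMk x)) :
      G.Reachable (root x) x).exists_isChain
  let P : Δ.chain k 1 →ₗ[k] Δ.chain k 2 := ∑ x : V,
    (LinearMap.proj (⟨{x}, cliqueComplex_singleton_mem G x, Finset.card_singleton x⟩ :
      {F : Finset V // F ∈ Δ.faces ∧ F.card = 1})).smulRight (Δ.pathChain k (L x))
  have hP : ∀ x, P (Δ.faceChain k 1 {x}) = Δ.pathChain k (L x) := by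
    intro x
    simp [P, SComplex.faceChain]
  refine LinearMap.ker_le_of_forall_single_sub_mem _ P _ fun F => ?_
  obtain ⟨a, b, hab, hF⟩ : ∃ a b, a < b ∧ F.1 = {a, b} := by
    obtain ⟨a, b, hne, hF⟩ := Finset.card_eq_two.mp F.2.2
    rcases hne.lt_or_gt with h | h
    · exact ⟨a, b, h, hF⟩
    · exact ⟨b, a, h, hF.trans (Finset.pair_comm a b)⟩
  have hface : {a, b} ∈ Δ.faces := hF ▸ F.2.1
  have hadj : G.Adj a b := by
    have : G.IsClique (({a, b} : Finset V) : Set V) := hface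
    simpa [hab.ne] using this
  have hedge : Δ.edgeChain k a b = Δ.faceChain k 2 {a, b} := if_pos hab
  rw [← SComplex.faceChain_val k Δ F, hF, ← hedge, SComplex.bdry_edgeChain k Δ hface, map_sub, hP,
    hP]
  have hroot : root a = root b :=
    congrArg Quot.out (SimpleGraph.ConnectedComponent.connectedComponentMk_eq_of_adj hadj)
  convert pathChain_add_edgeChain_sub_mem_range k hG hadj (hchain a) (hchain b) (hhead a)
    (hroot ▸ hhead b) (hlast a) (hlast b) using 1
  abel

end CliqueComplex

/-- a cycle of `G` generates a nontrivial element of the first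
reduced homology of the clique complex `Δ(G)` only if `G` has a minimal cycle;
in particular (and equivalently, since classes in `H̃₁` are generated by cycles),
if `G` is chordal then `H̃₁(Δ(G); k) = 0` for any field `k`. -/
theorem statement_1 {V : Type} [DecidableEq V] [Fintype V] [LinearOrder V]
    (k : Type) [Field k] (G : SimpleGraph V) (hG : IsChordal G) :
    Subsingleton ((cliqueComplex G).redHomology k 1) := by
  rw [Submodule.Quotient.subsingleton_iff, Submodule.comap_subtype_eq_top]
  exact ker_bdry_le_range_bdry k hG
end

section
/- Let d ≥ 3 and let I_Δ ⊂ S = k[x_0,…,x_d] be the Stanley–Reisner ideal of the cycle Δ on vertices x_0,…,x_d (so I_Δ is generated by the monomials x_i x_j for non-adjacent i,j in the cycle). Then Tor_i^S(I_Δ, k) is concentrated in degree i+2 for 0 ≤ i ≤ d-3, and Tor_{d-2}^S(I_Δ,k) is nonzero in degree d+1; in particular I_Δ satisfies N_{2,d-2} but not N_{2,d-1}. -/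
attribute [local instance] Classical.propDecidable

variable {V : Type} [DecidableEq V]

variable [Fintype V] [LinearOrder V]

/-!
Since every face of the cycle has at most two vertices, all chain groups above degree 1 vanish,
so the only homology that can survive in the relevant range is `H̃₁`, and `H̃₁ = ker ∂₁`.
A full subcomplex on at most `d` vertices misses some vertex `v₀`: a 1-cycle vanishes on the
edge at `v₀`, and its boundary at the next vertex, where only two edges meet, forces it to
vanish on the following edge, and so on around the cycle. For the whole cycle, `∂₁` goes
between spaces of the same dimension `d + 1` and is not onto, because `∂₀ ∘ ∂₁ = 0` while
`∂₀` is nonzero; hence `ker ∂₁ ≠ 0`.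
-/

open Finset

lemma Finset.pair_eq_pair_iff {α : Type*} [DecidableEq α] {x y z w : α} :
    ({x, y} : Finset α) = {z, w} ↔ x = z ∧ y = w ∨ x = w ∧ y = z := by
  rw [← coe_inj, coe_pair, coe_pair, Set.pair_eq_pair_iff]

lemma Fin.add_one_ne_self {d : ℕ} (hd : 1 ≤ d) (i : Fin (d + 1)) : i + 1 ≠ i := by
  rw [Ne, add_eq_left, Fin.one_eq_zero_iff]
  omega

lemma Fin.add_one_add_one_ne_self {d : ℕ} (hd : 2 ≤ d) (i : Fin (d + 1)) : i + 1 + 1 ≠ i := by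
  rw [Ne, add_assoc, add_eq_left, Fin.ext_iff, Fin.val_add, Fin.val_one',
    Nat.one_mod_eq_one.mpr (by omega), Nat.mod_eq_of_lt (by omega)]
  simp

namespace SComplex

variable {k : Type} [Field k] (Γ : SComplex V)

/-- A chain as a function on all finsets, vanishing off the faces of the right size; this
keeps boundary computations free of subtype bookkeeping. -/
noncomputable def extend {n : ℕ} (f : Γ.chain k n) (F : Finset V) : k :=
  if h : F ∈ Γ.faces ∧ F.card = n then f ⟨F, h⟩ else 0

variable {Γ}

omit [Fintype V] [LinearOrder V] in
lemma extend_coe {n : ℕ} (f : Γ.chain k n) (G : {F // F ∈ Γ.faces ∧ F.card = n}) :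
    Γ.extend f G.1 = f G :=
  dif_pos G.2

omit [Fintype V] [LinearOrder V] in
lemma extend_of_notMem {n : ℕ} (f : Γ.chain k n) {F : Finset V} (hF : F ∉ Γ.faces) :
    Γ.extend f F = 0 :=
  dif_neg fun h => hF h.1

omit [Fintype V] [LinearOrder V] in
lemma extend_of_card_ne {n : ℕ} (f : Γ.chain k n) {F : Finset V} (hF : F.card ≠ n) :
    Γ.extend f F = 0 :=
  dif_neg fun h => hF h.2

omit [Fintype V] [LinearOrder V] in
@[simp]
lemma extend_zero {n : ℕ} (F : Finset V) : Γ.extend (0 : Γ.chain k n) F = 0 := by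
  simp [extend]

lemma extend_bdry {n : ℕ} (f : Γ.chain k (n + 1)) {F : Finset V} (hF : F.card = n) :
    Γ.extend (Γ.bdry k n f) F =
      ∑ v ∈ Fᶜ, (-1 : k) ^ #(F.filter (· < v)) * Γ.extend f (insert v F) := by
  by_cases hFΓ : F ∈ Γ.faces
  · rw [show Γ.extend (Γ.bdry k n f) F = Γ.bdry k n f ⟨F, hFΓ, hF⟩ from
      extend_coe (Γ.bdry k n f) ⟨F, hFΓ, hF⟩]
    refine (sum_subset (subset_univ Fᶜ) fun v _ hv => ?_).symm.trans
      (sum_congr rfl fun v hv => ?_)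
    · rw [dif_neg fun h => h.1 (by simpa using hv)]
    · rw [mem_compl] at hv
      by_cases hvF : insert v F ∈ Γ.faces
      · rw [dif_pos ⟨hv, hvF⟩]
        exact congrArg _ (extend_coe f _).symm
      · rw [dif_neg fun h => hvF h.2, extend_of_notMem _ hvF, mul_zero]
  · rw [extend_of_notMem _ hFΓ]
    refine (sum_eq_zero fun v _ => ?_).symm
    rw [extend_of_notMem _ fun h => hFΓ (Γ.down_closed h (subset_insert v F)), mul_zero]

omit [Fintype V] [LinearOrder V] in
lemma subsingleton_chain {n : ℕ} (h : ∀ F ∈ Γ.faces, F.card < n) :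
    Subsingleton (Γ.chain k n) :=
  have : IsEmpty {F // F ∈ Γ.faces ∧ F.card = n} := ⟨fun G => (h G.1 G.2.1).ne G.2.2⟩
  inferInstance

omit [LinearOrder V] in
lemma finrank_chain (Γ : SComplex V) (n : ℕ) :
    Module.finrank k (Γ.chain k n) = Nat.card {F // F ∈ Γ.faces ∧ F.card = n} := by
  rw [Module.finrank_fintype_fun_eq_card, Nat.card_eq_fintype_card]

lemma subsingleton_redHomology_iff {n : ℕ} (h : ∀ F ∈ Γ.faces, F.card < n + 2) :
    Subsingleton (Γ.redHomology k n) ↔ Function.Injective (Γ.bdry k n) := by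
  have : Subsingleton (Γ.chain k (n + 2)) := subsingleton_chain h
  rw [Submodule.Quotient.subsingleton_iff, LinearMap.range_eq_bot.mpr (Subsingleton.elim _ 0),
    Submodule.comap_bot, Submodule.ker_subtype, ← LinearMap.ker_eq_bot,
    subsingleton_iff_bot_eq_top, Submodule.subsingleton_iff, Submodule.subsingleton_iff_eq_bot]

lemma bdry_zero_comp_bdry_one : Γ.bdry k 0 ∘ₗ Γ.bdry k 1 = 0 := by
  refine LinearMap.ext fun f => funext fun G => ?_
  set g : V × V → k := fun p => (-1 : k) ^ #(({p.1} : Finset V).filter (· < p.2)) *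
    Γ.extend f (insert p.2 {p.1}) with hg
  have hdiag (v : V) : g (v, v) = 0 := mul_eq_zero_of_right _ (extend_of_card_ne f (by simp))
  have hswap (p : V × V) : g p + g p.swap = 0 := by
    obtain ⟨v, u⟩ := p
    rcases lt_trichotomy v u with h | rfl | h
    · simp [hg, filter_singleton, h, h.not_gt, pair_comm]
    · simp [hdiag]
    · simp [hg, filter_singleton, h, h.not_gt, pair_comm]
  change Γ.bdry k 0 (Γ.bdry k 1 f) G = 0
  rw [← extend_coe (Γ.bdry k 0 (Γ.bdry k 1 f)) G, extend_bdry _ G.2.2, card_eq_zero.mp G.2.2]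
  simp only [compl_empty, filter_empty, card_empty, pow_zero, one_mul, insert_empty_eq]
  calc ∑ v, Γ.extend (Γ.bdry k 1 f) {v} = ∑ v, ∑ u, g (v, u) := sum_congr rfl fun v _ => by
        rw [extend_bdry f (card_singleton v)]
        refine sum_subset (subset_univ _) fun u _ hu => ?_
        rw [mem_compl, not_not, mem_singleton] at hu
        exact hu ▸ hdiag u
    _ = ∑ p, g p := (Fintype.sum_prod_type' _).symm
    _ = 0 := sum_ninvolution Prod.swap hswap
        (fun ⟨a, b⟩ hp hfix => hp ((show b = a from congrArg Prod.fst hfix) ▸ hdiag b))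
        (fun _ => mem_univ _) Prod.swap_swap

lemma not_surjective_bdry_one {v : V} (hv : {v} ∈ Γ.faces) :
    ¬ Function.Surjective (Γ.bdry k 1) := by
  intro hsurj
  set x : {F // F ∈ Γ.faces ∧ F.card = 1} := ⟨{v}, hv, card_singleton v⟩
  obtain ⟨f, hf⟩ := hsurj (Pi.single x 1)
  have hext (u : V) : Γ.extend (Pi.single x (1 : k)) {u} = if u = v then 1 else 0 := by
    by_cases hu : {u} ∈ Γ.faces
    · rw [show Γ.extend (Pi.single x (1 : k)) {u} = _ from
        extend_coe (Pi.single x (1 : k)) ⟨{u}, hu, card_singleton u⟩]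
      simp [x, Pi.single_apply]
    · rw [extend_of_notMem _ hu, if_neg (by rintro rfl; exact hu hv)]
  have hzero := congrFun (LinearMap.congr_fun (bdry_zero_comp_bdry_one (k := k) (Γ := Γ)) f)
    ⟨∅, Γ.empty_mem, card_empty⟩
  rw [LinearMap.comp_apply, hf, ← extend_coe (Γ.bdry k 0 _) ⟨∅, Γ.empty_mem, card_empty⟩,
    extend_bdry _ card_empty] at hzero
  simp [hext] at hzero

end SComplex

def cycleFaces (d : ℕ) : Set (Finset (Fin (d + 1))) :=
  {s | s = ∅ ∨ (∃ i, s = {i}) ∨ ∃ i : Fin (d + 1), s = {i, i + 1}}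

section

variable {d : ℕ} {k : Type} [Field k]

lemma card_le_two_of_mem_cycleFaces {s : Finset (Fin (d + 1))} (hs : s ∈ cycleFaces d) :
    s.card ≤ 2 := by
  rcases hs with rfl | ⟨i, rfl⟩ | ⟨i, rfl⟩
  · simp
  · simp
  · exact card_le_two

lemma card_lt_of_subset_cycleFaces {Γ : SComplex (Fin (d + 1))} (hΓ : Γ.faces ⊆ cycleFaces d)
    {n : ℕ} (hn : 2 < n) : ∀ F ∈ Γ.faces, F.card < n :=
  fun _ hF => (card_le_two_of_mem_cycleFaces (hΓ hF)).trans_lt hn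

lemma exists_eq_pair_of_mem_cycleFaces {s : Finset (Fin (d + 1))} (hs : s ∈ cycleFaces d)
    (h2 : s.card = 2) : ∃ i, s = {i, i + 1} := by
  rcases hs with rfl | ⟨i, rfl⟩ | h
  · simp at h2
  · simp at h2
  · exact h

lemma natCard_vertices_cycleFaces : Nat.card {F // F ∈ cycleFaces d ∧ F.card = 1} = d + 1 := by
  rw [← Nat.card_eq_of_bijective
    (fun i => ⟨{i}, Or.inr (Or.inl ⟨i, rfl⟩), card_singleton i⟩)
    ⟨fun i j h => singleton_injective (congrArg Subtype.val h), fun F => ?_⟩, Nat.card_fin]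
  obtain ⟨i, hi⟩ := card_eq_one.mp F.2.2
  exact ⟨i, Subtype.ext hi.symm⟩

lemma natCard_edges_cycleFaces (hd : 2 ≤ d) :
    Nat.card {F // F ∈ cycleFaces d ∧ F.card = 2} = d + 1 := by
  have hcard (i : Fin (d + 1)) : ({i, i + 1} : Finset _).card = 2 :=
    card_pair (Fin.add_one_ne_self (by omega) i).symm
  rw [← Nat.card_eq_of_bijective
    (fun i => ⟨{i, i + 1}, Or.inr (Or.inr ⟨i, rfl⟩), hcard i⟩)
    ⟨fun i j h => ?_, fun F => ?_⟩, Nat.card_fin]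
  · rcases pair_eq_pair_iff.mp (congrArg Subtype.val h) with ⟨hij, -⟩ | ⟨rfl, hji⟩
    · exact hij
    · exact absurd hji (Fin.add_one_add_one_ne_self hd j)
  · obtain ⟨i, hi⟩ := exists_eq_pair_of_mem_cycleFaces F.2.1 F.2.2
    exact ⟨i, Subtype.ext hi.symm⟩

open Fin.CommRing in
lemma SComplex.injective_bdry_one_of_subset_cycleFaces {Γ : SComplex (Fin (d + 1))}
    (hΓ : Γ.faces ⊆ cycleFaces d) {v₀ : Fin (d + 1)} (hv₀ : {v₀} ∉ Γ.faces) :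
    Function.Injective (Γ.bdry k 1) := by
  rw [← LinearMap.ker_eq_bot, Submodule.eq_bot_iff]
  intro f hf
  have hwalk (t : ℕ) : Γ.extend f {v₀ + (t : Fin (d + 1)), v₀ + t + 1} = 0 := by
    induction t with
    | zero =>
      rw [Nat.cast_zero, add_zero]
      exact extend_of_notMem f fun h => hv₀ (Γ.down_closed h (by simp))
    | succ t ih =>
      set w : Fin (d + 1) := v₀ + ((t + 1 : ℕ) : Fin (d + 1))
      rcases eq_or_ne (w + 1) w with hw | hw
      · exact extend_of_card_ne f (by simp [hw])
      have hsum := extend_bdry f (card_singleton w)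
      rw [LinearMap.mem_ker.mp hf, extend_zero] at hsum
      rw [sum_eq_single_of_mem (w + 1) (by simpa using hw) ?_, eq_comm, mul_eq_zero,
        or_iff_right (pow_ne_zero _ (neg_ne_zero.mpr one_ne_zero)), pair_comm] at hsum
      · exact hsum
      intro u _ hu
      refine mul_eq_zero_of_right _ ?_
      by_cases hface : {u, w} ∈ Γ.faces ∧ #{u, w} = 2
      · obtain ⟨i, hi⟩ := exists_eq_pair_of_mem_cycleFaces (hΓ hface.1) hface.2
        rcases pair_eq_pair_iff.mp hi with ⟨rfl, hwi⟩ | ⟨rfl, rfl⟩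
        · have hu' : u = v₀ + t :=
            add_right_cancel (hwi.symm.trans (by simp only [w, Nat.cast_succ, add_assoc]))
          rw [hwi, hu']
          exact ih
        · exact absurd rfl hu
      · exact dif_neg hface
  refine funext fun G => ?_
  obtain ⟨i, hi⟩ := exists_eq_pair_of_mem_cycleFaces (hΓ G.2.1) G.2.2
  have := hwalk (i - v₀).val
  rwa [Fin.cast_val_eq_self, add_sub_cancel, ← hi, extend_coe] at this

lemma SComplex.not_injective_bdry_one_of_faces_eq_cycleFaces (hd : 2 ≤ d)
    {Δ : SComplex (Fin (d + 1))} (hΔ : Δ.faces = cycleFaces d) :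
    ¬ Function.Injective (Δ.bdry k 1) := fun hinj =>
  have hrank : Module.finrank k (Δ.chain k 2) = Module.finrank k (Δ.chain k 1) := by
    rw [finrank_chain, finrank_chain, hΔ, natCard_edges_cycleFaces hd, natCard_vertices_cycleFaces]
  not_surjective_bdry_one (v := 0) (hΔ ▸ Or.inr (Or.inl ⟨0, rfl⟩))
    ((LinearMap.injective_iff_surjective_of_finrank_eq_finrank hrank).mp hinj)

end

/-- let `Δ` be the simplicial cycle on the `d+1` vertices
`x_0, …, x_d` (`d ≥ 3`), so that `I_Δ ⊂ S = k[x_0, …, x_d]` is generated by the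
monomials `x_i x_j` for non-adjacent `i, j`. Then `Tor_i^S(I_Δ, k)` is
concentrated in degree `i+2` for `0 ≤ i ≤ d-3`, while `Tor_{d-2}^S(I_Δ, k)` is
nonzero in degree `d+1`; in particular `I_Δ` satisfies `N_{2,d-2}` but not
`N_{2,d-1}`. Via Hochster's formula, `Tor_i^S(I_Δ,k)` in squarefree multidegree
`m` equals `H̃_{deg m - i - 2}(|m|; k)`, so the statement reads: for `i ≤ d-3`
every full subcomplex `Δ|_W` with `|W| ≠ i+2` has
`H̃_{|W|-i-2}(Δ|_W; k) = 0`, while `H̃_{(d+1)-(d-2)-2}(Δ; k) = H̃₁(Δ; k) ≠ 0`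
(whence the nonzero `Tor_{d-2}` in degree `d+1`). -/
theorem statement_10 (k : Type) [Field k] (d : ℕ) (hd : 3 ≤ d)
    (Δ : SComplex (Fin (d + 1)))
    (hΔ : Δ.faces = {s : Finset (Fin (d + 1)) |
        s = ∅ ∨ (∃ i, s = {i}) ∨ ∃ i : Fin (d + 1), s = {i, i + 1}}) :
    (∀ i : ℕ, i ≤ d - 3 → ∀ W : Finset (Fin (d + 1)),
        i + 2 ≤ W.card → W.card ≠ i + 2 →
        Subsingleton ((Δ.fullSub ↑W).redHomology k (W.card - i - 2))) ∧
      ¬ Subsingleton (Δ.redHomology k 1) := by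
  have hΔ' : Δ.faces = cycleFaces d := hΔ
  refine ⟨fun i hi W hge hne => ?_, ?_⟩
  · have hW : (Δ.fullSub W).faces ⊆ cycleFaces d := fun _ hF => hΔ'.subset hF.1
    rw [SComplex.subsingleton_redHomology_iff (card_lt_of_subset_cycleFaces hW (by omega))]
    rcases (by omega : W.card - i - 2 = 1 ∨ 2 ≤ W.card - i - 2) with h1 | h2
    · obtain ⟨v₀, hv₀⟩ : ∃ v₀, v₀ ∉ W := by
        by_contra! hall
        rw [eq_univ_of_forall hall, card_univ, Fintype.card_fin] at h1
        omega
      rw [h1]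
      exact SComplex.injective_bdry_one_of_subset_cycleFaces hW fun h => hv₀ (by simpa using h.2)
    · have := SComplex.subsingleton_chain (k := k)
        (card_lt_of_subset_cycleFaces hW (n := W.card - i - 2 + 1) (by omega))
      exact Function.injective_of_subsingleton _
  · rw [SComplex.subsingleton_redHomology_iff
      (card_lt_of_subset_cycleFaces hΔ'.subset (by omega))]
    exact SComplex.not_injective_bdry_one_of_faces_eq_cycleFaces (by omega) hΔ'
end

section
/- Two rational normal curves in P^r whose scheme-theoretic intersection is finite meet in a scheme of length at most r+2. -/
open MvPolynomial


variable {k : Type} [Field k]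

/-- exponent of the monomial `x^i y^(r-i)` -/
noncomputable def mexp (r i : ℕ) : Fin 2 →₀ ℕ := Finsupp.single 0 i + Finsupp.single 1 (r - i)

/-- the monomial basis of binary forms of degree `r` -/
noncomputable def mon (r : ℕ) (i : Fin (r+1)) : MvPolynomial (Fin 2) k :=
  X 0 ^ (i : ℕ) * X 1 ^ (r - (i : ℕ))

lemma mexp_apply0 (r i : ℕ) : mexp r i 0 = i := by
  simp [mexp, Finsupp.single_apply]

lemma mon_eq_monomial (r : ℕ) (i : Fin (r+1)) :
    (mon r i : MvPolynomial (Fin 2) k) = monomial (mexp r (i:ℕ)) 1 := by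
  rw [mon, X_pow_eq_monomial, X_pow_eq_monomial, monomial_mul, one_mul]
  rfl

lemma mon_mem (r : ℕ) (i : Fin (r+1)) :
    (mon r i : MvPolynomial (Fin 2) k) ∈ homogeneousSubmodule (Fin 2) k r := by
  rw [mem_homogeneousSubmodule]
  have h1 : (X 0 ^ (i:ℕ) * X 1 ^ (r - (i:ℕ)) : MvPolynomial (Fin 2) k).IsHomogeneous
      (1 * (i:ℕ) + 1 * (r - (i:ℕ))) :=
    ((isHomogeneous_X k 0).pow _).mul ((isHomogeneous_X k 1).pow _)
  have h2 : 1 * (i:ℕ) + 1 * (r - (i:ℕ)) = r := by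
    have := i.isLt; omega
  rw [h2] at h1
  exact h1

lemma coeff_mexp_mon (r : ℕ) (i : Fin (r+1)) (a : ℕ) :
    coeff (mexp r a) (mon r i : MvPolynomial (Fin 2) k) = if (i : ℕ) = a then 1 else 0 := by
  rw [mon_eq_monomial, coeff_monomial]
  by_cases hia : (i:ℕ) = a
  · rw [if_pos (by rw [hia]), if_pos hia]
  · rw [if_neg (fun hh => hia (by simpa [mexp_apply0] using congrArg (fun d => d 0) hh)),
      if_neg hia]

lemma mon_li (r : ℕ) : LinearIndependent k (mon r (k := k)) := by
  rw [Fintype.linearIndependent_iff]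
  intro g hg i
  have hco : ∀ j : Fin (r+1),
      coeff (mexp r (i:ℕ)) (mon r j : MvPolynomial (Fin 2) k)
        = if (j = i) then (1:k) else 0 := by
    intro j
    rw [coeff_mexp_mon r j (i:ℕ)]
    congr 1
    simp [Fin.ext_iff]
  have := congrArg (coeff (mexp r (i:ℕ))) hg
  rw [coeff_sum] at this
  simp only [coeff_smul, hco, coeff_zero, smul_eq_mul, mul_ite, mul_one, mul_zero] at this
  rwa [Finset.sum_ite_eq' Finset.univ i g, if_pos (Finset.mem_univ i)] at this

lemma homog_support_eq (r : ℕ) (p : MvPolynomial (Fin 2) k)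
    (hp : p ∈ homogeneousSubmodule (Fin 2) k r) (d : Fin 2 →₀ ℕ) (hd : coeff d p ≠ 0) :
    d = mexp r (d 0) ∧ d 0 ≤ r := by
  rw [mem_homogeneousSubmodule] at hp
  have hdeg := hp hd
  -- hdeg : degree condition
  have hsum : d 0 + d 1 = r := by
    have : (Finsupp.weight 1) d = r := hdeg
    rw [Finsupp.weight_apply, Finsupp.sum_fintype] at this
    · simpa [Fin.sum_univ_two] using this
    · intro i; simp
  constructor
  · ext s
    fin_cases s
    · simp [mexp_apply0]
    · simp [mexp, Finsupp.single_apply]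
      omega
  · omega

/-- any binary form of degree r is the obvious combination of monomials -/
lemma repr_mon (r : ℕ) (p : MvPolynomial (Fin 2) k)
    (hp : p ∈ homogeneousSubmodule (Fin 2) k r) :
    p = ∑ i : Fin (r+1), coeff (mexp r (i:ℕ)) p • mon r i := by
  conv_lhs => rw [← support_sum_monomial_coeff p]
  have hsub : p.support ⊆ Finset.image (fun i : Fin (r+1) => mexp r (i:ℕ)) Finset.univ := by
    intro d hd
    rw [mem_support_iff] at hd
    obtain ⟨h1, h2⟩ := homog_support_eq r p hp d hd
    exact Finset.mem_image.mpr ⟨⟨d 0, by omega⟩, Finset.mem_univ _, by rw [← h1]⟩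
  rw [Finset.sum_subset hsub (fun d _ hd => by
    rw [mem_support_iff, not_not] at hd; rw [hd, map_zero])]
  rw [Finset.sum_image (by
    intro a _ b _ hab
    have := congrArg (fun d => d 0) hab
    simp only [mexp_apply0] at this
    exact Fin.ext this)]
  apply Finset.sum_congr rfl
  intro i _
  rw [mon_eq_monomial, smul_monomial, smul_eq_mul, mul_one]

noncomputable def coeffMap (n : ℕ) :
    (homogeneousSubmodule (Fin 2) k n) →ₗ[k] (Fin (n+1) → k) where
  toFun p := fun i => coeff (mexp n (i:ℕ)) p.val
  map_add' p q := by ext i; simp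
  map_smul' a p := by ext i; simp

lemma coeffMap_injective (n : ℕ) : Function.Injective (coeffMap (k := k) n) := by
  intro p q hpq
  apply Subtype.ext
  rw [repr_mon n p.val p.2, repr_mon n q.val q.2]
  refine Finset.sum_congr rfl fun i _ => ?_
  have := congrFun hpq i
  simp only [coeffMap, LinearMap.coe_mk, AddHom.coe_mk] at this
  rw [this]

instance instFdHomog (n : ℕ) : FiniteDimensional k (homogeneousSubmodule (Fin 2) k n) :=
  FiniteDimensional.of_injective (coeffMap n) (coeffMap_injective n)

lemma finrank_homog (n : ℕ) :
    Module.finrank k (homogeneousSubmodule (Fin 2) k n) = n + 1 := by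
  apply le_antisymm
  · have := LinearMap.finrank_le_finrank_of_injective (coeffMap_injective (k := k) n)
    rwa [Module.finrank_fin_fun] at this
  · have hli : LinearIndependent k (fun i : Fin (n+1) =>
        (⟨mon n i, mon_mem n i⟩ : homogeneousSubmodule (Fin 2) k n)) := by
      apply LinearIndependent.of_comp (homogeneousSubmodule (Fin 2) k n).subtype
      exact mon_li n
    simpa using hli.fintype_card_le_finrank

/-- composition of `aeval`s -/
lemma aeval_aeval {σ τ : Type} {A : Type} [CommSemiring A] [Algebra k A]
    (φ : σ → MvPolynomial τ k) (w : τ → A) (Q : MvPolynomial σ k) :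
    aeval w (aeval φ Q) = aeval (fun s => aeval w (φ s)) Q :=
  DFunLike.congr_fun (comp_aeval φ (aeval w)) Q


lemma lemF [IsAlgClosed k] :
    ∀ (n : ℕ) (u v : Fin n → MvPolynomial (Fin 2) k),
      (∀ lam : Fin n → k, ∑ i, lam i • u i = 0 → ∑ i, lam i • v i = 0 → lam = 0) →
      (∃ i j, u i * v j - u j * v i ≠ 0) →
      n - 1 ≤ Module.finrank k (Submodule.span k
        (Set.range (fun q : Fin n × Fin n => u q.1 * v q.2 - u q.2 * v q.1))) := by
  intro n
  induction n with
  | zero => intro u v _ _; simp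
  | succ N ih =>
    intro u v hinj hne
    obtain ⟨i₀, j₀, hd0⟩ := hne
    set S := Submodule.span k
      (Set.range (fun q : Fin (N+1) × Fin (N+1) => u q.1 * v q.2 - u q.2 * v q.1)) with hSdef
    haveI : FiniteDimensional k S := FiniteDimensional.span_of_finite k (Set.finite_range _)
    have hgen : ∀ i j, u i * v j - u j * v i ∈ S :=
      fun i j => Submodule.subset_span ⟨(i, j), rfl⟩
    obtain ⟨p, hp⟩ : ∃ p : Fin 2 → k, eval p (u i₀ * v j₀ - u j₀ * v i₀) ≠ 0 := by
      by_contra hc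
      push_neg at hc
      exact hd0 (MvPolynomial.funext fun x => by rw [hc x, map_zero])
    set e : Fin (N+1) → k := fun s => eval p (u s) with he
    set ee : Fin (N+1) → k := fun s => eval p (v s) with hee
    have hpval : e i₀ * ee j₀ - e j₀ * ee i₀ ≠ 0 := by simpa [he, hee] using hp
    obtain ⟨m, hm⟩ : ∃ m, e m ≠ 0 := by
      by_contra hc; push_neg at hc
      apply hpval; rw [hc i₀, hc j₀]; ring
    set uh : Fin N → MvPolynomial (Fin 2) k :=
      fun i => C (e m) * u (m.succAbove i) - C (e (m.succAbove i)) * u m with huh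
    set vh : Fin N → MvPolynomial (Fin 2) k :=
      fun i => C (e m) * v (m.succAbove i) - C (e (m.succAbove i)) * v m with hvh
    have hexp : ∀ i j, uh i * vh j - uh j * vh i
        = C (e m) * C (e m) * (u (m.succAbove i) * v (m.succAbove j)
            - u (m.succAbove j) * v (m.succAbove i))
          - C (e m) * C (e (m.succAbove j)) * (u (m.succAbove i) * v m - u m * v (m.succAbove i))
          + C (e m) * C (e (m.succAbove i)) * (u (m.succAbove j) * v m - u m * v (m.succAbove j))
        := by
      intro i j; simp only [huh, hvh]; ring
    -- the kernel argument
    have hker : ∀ θ : Fin (N+1) → k,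
        (∀ j, ∑ s, θ s • (u s * v j - u j * v s) = 0) → θ = 0 := by
      intro θ hθ
      have hUV : ∀ j, (∑ s, θ s • u s) * v j - (∑ s, θ s • v s) * u j = 0 := by
        intro j
        rw [← hθ j, Finset.sum_mul, Finset.sum_mul, ← Finset.sum_sub_distrib]
        refine Finset.sum_congr rfl fun s _ => ?_
        simp only [smul_eq_C_mul]
        ring
      set U := ∑ s, θ s • u s with hU
      set V := ∑ s, θ s • v s with hV
      have hU0 : U = 0 := by
        have h1 : U * (u i₀ * v j₀ - u j₀ * v i₀) = 0 := by
          linear_combination u i₀ * hUV j₀ - u j₀ * hUV i₀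
        rcases mul_eq_zero.mp h1 with h | h
        · exact h
        · exact absurd h hd0
      have hV0 : V = 0 := by
        have husome : u i₀ ≠ 0 ∨ u j₀ ≠ 0 := by
          by_contra hc; push_neg at hc
          apply hd0; rw [hc.1, hc.2]; ring
        have hVu : ∀ j, V * u j = 0 := by
          intro j
          have h2 := hUV j; rw [hU0, zero_mul, zero_sub, neg_eq_zero] at h2; exact h2
        rcases husome with h | h
        · rcases mul_eq_zero.mp (hVu i₀) with h' | h'
          · exact h'
          · exact absurd h' h
        · rcases mul_eq_zero.mp (hVu j₀) with h' | h'
          · exact h'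
          · exact absurd h' h
      exact hinj θ hU0 hV0
    by_cases hall : ∀ i j, uh i * vh j - uh j * vh i = 0
    · -- case A : all projected minors vanish; exhibit N independent minors directly
      have hCem : (C (e m) : MvPolynomial (Fin 2) k) ≠ 0 := by
        simpa using hm
      have hrel : ∀ i j, C (e m) * (u (m.succAbove i) * v (m.succAbove j)
            - u (m.succAbove j) * v (m.succAbove i))
          = C (e (m.succAbove j)) * (u (m.succAbove i) * v m - u m * v (m.succAbove i))
            - C (e (m.succAbove i)) * (u (m.succAbove j) * v m - u m * v (m.succAbove j)) := by
        intro i j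
        have h1 := hexp i j
        rw [hall i j] at h1
        have h2 : C (e m) * (C (e m) * (u (m.succAbove i) * v (m.succAbove j)
              - u (m.succAbove j) * v (m.succAbove i))
            - (C (e (m.succAbove j)) * (u (m.succAbove i) * v m - u m * v (m.succAbove i))
              - C (e (m.succAbove i)) * (u (m.succAbove j) * v m - u m * v (m.succAbove j)))) = 0 := by
          linear_combination -h1
        rcases mul_eq_zero.mp h2 with h | h
        · exact absurd h hCem
        · rw [sub_eq_zero] at h; exact h
      have hli : LinearIndependent k
          (fun i : Fin N => u (m.succAbove i) * v m - u m * v (m.succAbove i)) := by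
        rw [Fintype.linearIndependent_iff]
        intro lam hsum
        set c := ∑ i, lam i * e (m.succAbove i) with hc
        set θ : Fin (N+1) → k := m.insertNth (-c) (fun i => e m * lam i) with hθdef
        have hθm : θ m = -c := by simp [hθdef]
        have hθa : ∀ i, θ (m.succAbove i) = e m * lam i := by
          intro i; simp [hθdef]
        have hθ0 : θ = 0 := by
          apply hker
          intro j
          rw [Fin.sum_univ_succAbove (fun s => θ s • (u s * v j - u j * v s)) m]
          by_cases hj : j = m
          · rw [hj]
            have hdmm : u m * v m - u m * v m = 0 := by ring
            rw [hdmm, smul_zero, zero_add]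
            have hterm : ∀ i : Fin N, θ (m.succAbove i) • (u (m.succAbove i) * v m
                  - u m * v (m.succAbove i))
                = e m • (lam i • (u (m.succAbove i) * v m - u m * v (m.succAbove i))) := by
              intro i; rw [hθa i, mul_smul]
            rw [Finset.sum_congr rfl (fun i _ => hterm i), ← Finset.smul_sum, hsum, smul_zero]
          · obtain ⟨j', rfl⟩ := Fin.exists_succAbove_eq hj
            have hterm : ∀ i : Fin N, θ (m.succAbove i) • (u (m.succAbove i) * v (m.succAbove j')
                  - u (m.succAbove j') * v (m.succAbove i))
                = e (m.succAbove j') • (lam i • (u (m.succAbove i) * v m - u m * v (m.succAbove i)))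
                  - (lam i * e (m.succAbove i)) • (u (m.succAbove j') * v m - u m * v (m.succAbove j')) := by
              intro i
              have h3 := hrel i j'
              rw [hθa i]
              simp only [smul_eq_C_mul, map_mul]
              linear_combination C (lam i) * h3
            rw [Finset.sum_congr rfl (fun i _ => hterm i), Finset.sum_sub_distrib,
              ← Finset.smul_sum, hsum, smul_zero, zero_sub, ← Finset.sum_smul, ← hc, hθm]
            have h6 : u m * v (m.succAbove j') - u (m.succAbove j') * v m
                = -((u (m.succAbove j') * v m - u m * v (m.succAbove j'))) := by ring
            rw [h6, smul_neg, neg_smul, neg_neg]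
            exact add_neg_cancel _
        intro i
        have h7 : θ (m.succAbove i) = 0 := by rw [hθ0]; rfl
        rw [hθa i] at h7
        rcases mul_eq_zero.mp h7 with h | h
        · exact absurd h hm
        · exact h
      have hle : N ≤ Module.finrank k S := by
        have hliS : LinearIndependent k (fun i : Fin N =>
            (⟨u (m.succAbove i) * v m - u m * v (m.succAbove i), hgen _ _⟩ : S)) := by
          apply LinearIndependent.of_comp S.subtype
          exact hli
        simpa using hliS.fintype_card_le_finrank
      exact le_trans (by omega) hle
    · -- case B : induct
      push_neg at hall
      obtain ⟨i₁, j₁, hne1⟩ := hall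
      have hinj' : ∀ lam : Fin N → k,
          ∑ i, lam i • uh i = 0 → ∑ i, lam i • vh i = 0 → lam = 0 := by
        intro lam h1 h2
        set c := ∑ i, lam i * e (m.succAbove i) with hc
        set θ : Fin (N+1) → k := m.insertNth (-c) (fun i => e m * lam i) with hθdef
        have hθm : θ m = -c := by simp [hθdef]
        have hθa : ∀ i, θ (m.succAbove i) = e m * lam i := by
          intro i; simp [hθdef]
        have key : ∀ w : Fin (N+1) → MvPolynomial (Fin 2) k,
            (∑ i, lam i • (C (e m) * w (m.succAbove i) - C (e (m.succAbove i)) * w m)) = 0 →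
            ∑ s, θ s • w s = 0 := by
          intro w hw
          rw [Fin.sum_univ_succAbove (fun s => θ s • w s) m, hθm]
          have hterm : ∀ i : Fin N, θ (m.succAbove i) • w (m.succAbove i)
              = lam i • (C (e m) * w (m.succAbove i) - C (e (m.succAbove i)) * w m)
                + (lam i * e (m.succAbove i)) • w m := by
            intro i
            rw [hθa i]
            simp only [smul_eq_C_mul, map_mul]
            ring
          rw [Finset.sum_congr rfl (fun i _ => hterm i), Finset.sum_add_distrib, hw,
            zero_add, ← Finset.sum_smul, ← hc, neg_smul]
          exact neg_add_cancel _
        have hθ0 : θ = 0 := hinj θ (key u h1) (key v h2)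
        funext i
        rw [Pi.zero_apply]
        have h7 : θ (m.succAbove i) = 0 := by rw [hθ0]; rfl
        rw [hθa i] at h7
        rcases mul_eq_zero.mp h7 with h | h
        · exact absurd h hm
        · exact h
      have hIH := ih uh vh hinj' ⟨i₁, j₁, hne1⟩
      set Sh := Submodule.span k
        (Set.range (fun q : Fin N × Fin N => uh q.1 * vh q.2 - uh q.2 * vh q.1)) with hShdef
      set Φ : MvPolynomial (Fin 2) k →ₗ[k] k :=
        { toFun := eval p,
          map_add' := by intros; simp,
          map_smul' := by intros; simp [smul_eq_C_mul] } with hΦdef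
      have hΦuh : ∀ i, Φ (uh i) = 0 := by
        intro i
        simp only [hΦdef, huh, LinearMap.coe_mk, AddHom.coe_mk, map_sub, map_mul, eval_C]
        show e m * e (m.succAbove i) - e (m.succAbove i) * e m = 0
        ring
      have hΦdh : ∀ i j, Φ (uh i * vh j - uh j * vh i) = 0 := by
        intro i j
        have h8 : Φ (uh i * vh j - uh j * vh i)
            = Φ (uh i) * eval p (vh j) - Φ (uh j) * eval p (vh i) := by
          simp [hΦdef]
        rw [h8, hΦuh i, hΦuh j]; ring
      have hShle : Sh ≤ S ⊓ LinearMap.ker Φ := by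
        rw [Submodule.span_le]
        rintro x ⟨q, rfl⟩
        dsimp only
        refine Submodule.mem_inf.mpr ⟨?_, ?_⟩
        · have hco : uh q.1 * vh q.2 - uh q.2 * vh q.1
              = (e m * e m) • (u (m.succAbove q.1) * v (m.succAbove q.2)
                  - u (m.succAbove q.2) * v (m.succAbove q.1))
                - (e m * e (m.succAbove q.2)) • (u (m.succAbove q.1) * v m
                    - u m * v (m.succAbove q.1))
                + (e m * e (m.succAbove q.1)) • (u (m.succAbove q.2) * v m
                    - u m * v (m.succAbove q.2)) := by
            simp only [smul_eq_C_mul, map_mul]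
            linear_combination hexp q.1 q.2
          rw [hco]
          exact S.add_mem (S.sub_mem (S.smul_mem _ (hgen _ _)) (S.smul_mem _ (hgen _ _)))
            (S.smul_mem _ (hgen _ _))
        · exact LinearMap.mem_ker.mpr (hΦdh q.1 q.2)
      have hlt : S ⊓ LinearMap.ker Φ < S := by
        apply lt_of_le_of_ne inf_le_left
        intro heq
        have h9 : u i₀ * v j₀ - u j₀ * v i₀ ∈ S ⊓ LinearMap.ker Φ := by
          rw [heq]; exact hgen i₀ j₀
        exact hp h9.2
      haveI : FiniteDimensional k (S ⊓ LinearMap.ker Φ : Submodule k (MvPolynomial (Fin 2) k)) :=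
        Submodule.finiteDimensional_of_le inf_le_left
      have h10 : Module.finrank k Sh
          ≤ Module.finrank k (S ⊓ LinearMap.ker Φ : Submodule k (MvPolynomial (Fin 2) k)) :=
        Submodule.finrank_mono hShle
      have h11 := Submodule.finrank_lt_finrank_of_lt hlt
      omega

lemma dvd_exists {h w : MvPolynomial (Fin 2) k} (hd : h ∣ w) :
    ∃ q, w = h * q := hd

/-- the submodule of multiples of `h` -/
def divSub (h : MvPolynomial (Fin 2) k) : Submodule k (MvPolynomial (Fin 2) k) where
  carrier := {w | h ∣ w}
  add_mem' := fun ha hb => dvd_add ha hb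
  zero_mem' := dvd_zero h
  smul_mem' := fun c x hx => by
    show h ∣ c • x
    rw [smul_eq_C_mul]
    exact Dvd.dvd.mul_left hx (C c)

lemma mem_divSub {h x : MvPolynomial (Fin 2) k} : x ∈ divSub h ↔ h ∣ x := Iff.rfl

lemma homog_div {h w q : MvPolynomial (Fin 2) k} {a b : ℕ}
    (hh : h ∈ homogeneousSubmodule (Fin 2) k a)
    (hw : w ∈ homogeneousSubmodule (Fin 2) k b)
    (hq : w = h * q) :
    (a ≤ b → w = h * homogeneousComponent (b - a) q) ∧ (w ≠ 0 → a ≤ b) := by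
  have hcomp : ∀ n : ℕ, homogeneousComponent b (h * homogeneousComponent n q)
      = if b = a + n then h * homogeneousComponent n q else 0 := by
    intro n
    have hmem : h * homogeneousComponent n q ∈ homogeneousSubmodule (Fin 2) k (a + n) := by
      rw [mem_homogeneousSubmodule]
      exact ((mem_homogeneousSubmodule _ _).mp hh).mul
        (homogeneousComponent_isHomogeneous n q)
    exact homogeneousComponent_of_mem hmem
  have hwb : homogeneousComponent b w = w := by
    rw [homogeneousComponent_of_mem hw, if_pos rfl]
  have hsplit : w = ∑ n ∈ Finset.range (q.totalDegree + 1),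
      if b = a + n then h * homogeneousComponent n q else 0 := by
    calc w = homogeneousComponent b (h * q) := by rw [← hq, hwb]
    _ = ∑ n ∈ Finset.range (q.totalDegree + 1),
        homogeneousComponent b (h * homogeneousComponent n q) := by
        conv_lhs => rw [← sum_homogeneousComponent q]
        rw [Finset.mul_sum, map_sum]
    _ = _ := Finset.sum_congr rfl fun n _ => hcomp n
  constructor
  · intro hab
    rw [hsplit, Finset.sum_eq_single (b - a)]
    · rw [if_pos (by omega)]
    · intro n _ hne
      rw [if_neg (by omega)]
    · intro hnotin
      rw [if_pos (by omega)]
      rw [homogeneousComponent_eq_zero _ q (by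
        simp only [Finset.mem_range, not_lt] at hnotin; omega), mul_zero]
  · intro hwne
    by_contra hab
    push_neg at hab
    apply hwne
    rw [hsplit]
    apply Finset.sum_eq_zero
    intro n _
    rw [if_neg (by omega)]

lemma div_inj (h : MvPolynomial (Fin 2) k) (a b : ℕ)
    (hh : h ∈ homogeneousSubmodule (Fin 2) k a) (h0 : h ≠ 0) (hab : a ≤ b) :
    ∃ Ψ : (homogeneousSubmodule (Fin 2) k b ⊓ divSub h :
        Submodule k (MvPolynomial (Fin 2) k)) →ₗ[k] (Fin (b - a + 1) → k),
      Function.Injective Ψ := by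
  classical
  set M := (homogeneousSubmodule (Fin 2) k b ⊓ divSub h :
    Submodule k (MvPolynomial (Fin 2) k)) with hM
  have hdvd : ∀ w : M, h ∣ (w : MvPolynomial (Fin 2) k) :=
    fun w => (Submodule.mem_inf.mp w.2).2
  set Q : M → MvPolynomial (Fin 2) k := fun w => (dvd_exists (hdvd w)).choose with hQdef
  have hqspec : ∀ w : M, (w : MvPolynomial (Fin 2) k) = h * Q w :=
    fun w => (dvd_exists (hdvd w)).choose_spec
  have hQadd : ∀ w1 w2 : M, Q (w1 + w2) = Q w1 + Q w2 := by
    intro w1 w2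
    apply mul_left_cancel₀ h0
    rw [mul_add, ← hqspec, ← hqspec, ← hqspec, Submodule.coe_add]
  have hQsmul : ∀ (c : k) (w : M), Q (c • w) = c • Q w := by
    intro c w
    apply mul_left_cancel₀ h0
    rw [← hqspec]
    rw [show h * (c • Q w) = c • (h * Q w) from mul_smul_comm c h (Q w)]
    rw [← hqspec, Submodule.coe_smul]
  have hQsub : ∀ w1 w2 : M, Q (w1 - w2) = Q w1 - Q w2 := by
    intro w1 w2
    apply mul_left_cancel₀ h0
    rw [mul_sub, ← hqspec, ← hqspec, ← hqspec, Submodule.coe_sub]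
  have hker : ∀ w : M, (∀ i : Fin (b - a + 1),
      coeff (mexp (b - a) (i:ℕ)) (homogeneousComponent (b - a) (Q w)) = 0) → w = 0 := by
    intro w hco
    have hq0 : homogeneousComponent (b - a) (Q w) = 0 := by
      have hmem2 : homogeneousComponent (b - a) (Q w)
          ∈ homogeneousSubmodule (Fin 2) k (b - a) := by
        rw [mem_homogeneousSubmodule]
        exact homogeneousComponent_isHomogeneous _ _
      rw [repr_mon (b - a) _ hmem2]
      apply Finset.sum_eq_zero
      intro i _
      rw [hco i, zero_smul]
    have hw0 : (w : MvPolynomial (Fin 2) k) = 0 := by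
      rw [(homog_div hh (Submodule.mem_inf.mp w.2).1 (hqspec w)).1 hab, hq0, mul_zero]
    exact Subtype.ext hw0
  refine ⟨{ toFun := fun w i =>
              coeff (mexp (b - a) (i:ℕ)) (homogeneousComponent (b - a) (Q w)),
            map_add' := ?_, map_smul' := ?_ }, ?_⟩
  · intro w1 w2
    funext i
    rw [hQadd]
    simp
  · intro c w
    funext i
    rw [hQsmul]
    simp
  · intro w1 w2 hww
    have h12 : w1 - w2 = 0 := by
      apply hker
      intro i
      rw [hQsub, map_sub, coeff_sub]
      have h13 := congrFun hww i
      simp only [LinearMap.coe_mk, AddHom.coe_mk] at h13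
      rw [h13, sub_self]
    exact sub_eq_zero.mp h12

lemma mon_mul_eq (r : ℕ) (a b a' b' : Fin (r+1)) (hs : (a:ℕ) + (b:ℕ) = (a':ℕ) + (b':ℕ)) :
    (mon r a * mon r b : MvPolynomial (Fin 2) k) = mon r a' * mon r b' := by
  have ha := a.isLt; have hb := b.isLt; have ha' := a'.isLt; have hb' := b'.isLt
  rw [mon_eq_monomial, mon_eq_monomial, mon_eq_monomial, mon_eq_monomial,
    monomial_mul, monomial_mul]
  have hexp2 : mexp r (a:ℕ) + mexp r (b:ℕ) = mexp r (a':ℕ) + mexp r (b':ℕ) := by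
    refine Finsupp.ext fun s => ?_
    fin_cases s
    · simp [mexp, Finsupp.single_apply]; omega
    · simp [mexp, Finsupp.single_apply]; omega
  rw [hexp2]

lemma sum_swap_smul {M M' : ℕ} (lam : Fin M → k) (cc : Fin M → Fin M' → k)
    (w : Fin M' → MvPolynomial (Fin 2) k) :
    ∑ t, lam t • (∑ u, cc t u • w u) = ∑ u, (∑ t, lam t * cc t u) • w u := by
  calc ∑ t, lam t • (∑ u, cc t u • w u) = ∑ t, ∑ u, (lam t * cc t u) • w u := by
        refine Finset.sum_congr rfl fun t _ => ?_
        rw [Finset.smul_sum]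
        exact Finset.sum_congr rfl fun u _ => smul_smul _ _ _
  _ = ∑ u, ∑ t, (lam t * cc t u) • w u := Finset.sum_comm
  _ = ∑ u, (∑ t, lam t * cc t u) • w u := by
        refine Finset.sum_congr rfl fun u _ => ?_
        rw [← Finset.sum_smul]

lemma aeval_linsub {A : Type} [CommSemiring A] [Algebra k A] (r : ℕ)
    (w : Fin (r+1) → A) (cc : Fin (r+1) → k) :
    aeval w (∑ t, C (cc t) * X t : MvPolynomial (Fin (r+1)) k) = ∑ t, cc t • w t := by
  rw [map_sum]
  refine Finset.sum_congr rfl fun t _ => ?_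
  rw [map_mul, aeval_C, aeval_X, Algebra.smul_def]

lemma main_normalized [IsAlgClosed k] (r : ℕ) (hr : 1 ≤ r)
    (gt : Fin (r+1) → MvPolynomial (Fin 2) k)
    (hgtmem : ∀ i, gt i ∈ homogeneousSubmodule (Fin 2) k r)
    (hgtli : LinearIndependent k gt)
    (hQex : ∃ Q : MvPolynomial (Fin (r+1)) k, aeval (mon r (k:=k)) Q = 0 ∧ aeval gt Q ≠ 0)
    (ℓ : ℕ) (h : MvPolynomial (Fin 2) k) (hhdeg : h ∈ homogeneousSubmodule (Fin 2) k ℓ)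
    (hdvd : ∀ i j : Fin r, h ∣ (gt i.castSucc * gt j.succ - gt j.castSucc * gt i.succ)) :
    ℓ ≤ r + 2 := by
  by_cases hall : ∀ i j : Fin r, gt i.castSucc * gt j.succ - gt j.castSucc * gt i.succ = 0
  · -- rank one case : contradiction with hQex
    exfalso
    obtain ⟨Q, hQm, hQg⟩ := hQex
    set K := FractionRing (MvPolynomial (Fin 2) k) with hK
    set L := AlgebraicClosure K with hL
    set ζ : MvPolynomial (Fin 2) k →+* L :=
      (algebraMap K L).comp (algebraMap (MvPolynomial (Fin 2) k) K) with hζ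
    have hζinj : Function.Injective ζ :=
      (algebraMap K L).injective.comp (IsFractionRing.injective _ K)
    have hg0 : gt 0 ≠ 0 := hgtli.ne_zero 0
    have hG0 : ζ (gt 0) ≠ 0 := fun hc => hg0 (hζinj (by rw [hc, map_zero]))
    set i1 : Fin (r+1) := ⟨1, by omega⟩ with hi1
    set τ : L := ζ (gt i1) / ζ (gt 0) with hτdef
    have hτ : ζ (gt i1) = τ * ζ (gt 0) := (div_mul_cancel₀ _ hG0).symm
    have hgeo : ∀ n (hn : n < r + 1), ζ (gt ⟨n, hn⟩) = ζ (gt 0) * τ ^ n := by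
      intro n
      induction n with
      | zero =>
        intro hn
        rw [show (⟨0, hn⟩ : Fin (r+1)) = 0 from rfl, pow_zero, mul_one]
      | succ n ihn =>
        intro hn
        have hn' : n < r + 1 := by omega
        have hnr : n < r := by omega
        have hrel := hall ⟨0, by omega⟩ ⟨n, hnr⟩
        rw [sub_eq_zero] at hrel
        have h1 : gt 0 * gt ⟨n+1, hn⟩ = gt ⟨n, hn'⟩ * gt i1 := hrel
        have h2 := congrArg ζ h1
        rw [map_mul, map_mul, ihn hn', hτ] at h2
        apply mul_left_cancel₀ hG0
        rw [h2]
        ring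
    obtain ⟨cc, hcc⟩ := IsAlgClosed.exists_root
      (Polynomial.X ^ r - Polynomial.C (ζ (gt 0)) : Polynomial L)
      (by
        rw [Polynomial.degree_X_pow_sub_C (by omega) _]
        exact_mod_cast (by omega : r ≠ 0))
    have hccr : cc ^ r = ζ (gt 0) := by
      have h3 : cc ^ r - ζ (gt 0) = 0 := by
        simpa [Polynomial.IsRoot] using hcc
      linear_combination h3
    have hvals : ∀ s : Fin (r+1), ζ (gt s) = (τ * cc) ^ (s:ℕ) * cc ^ (r - (s:ℕ)) := by
      intro s
      have h5 : ζ (gt s) = ζ (gt 0) * τ ^ (s:ℕ) := by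
        have h6 := hgeo s.val s.isLt
        rwa [Fin.eta] at h6
      have h7 : (τ * cc) ^ (s:ℕ) * cc ^ (r - (s:ℕ)) = τ ^ (s:ℕ) * cc ^ ((s:ℕ) + (r - (s:ℕ))) := by
        rw [mul_pow, pow_add]; ring
      rw [h5, h7, show (s:ℕ) + (r - (s:ℕ)) = r from by (have := s.isLt; omega), hccr]
      ring
    set ψ : k →+* L := ζ.comp (C : k →+* MvPolynomial (Fin 2) k) with hψ
    have hAhom : (ζ.comp ((aeval gt : MvPolynomial (Fin (r+1)) k →ₐ[k]
          MvPolynomial (Fin 2) k) : MvPolynomial (Fin (r+1)) k →+* MvPolynomial (Fin 2) k))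
        = eval₂Hom ψ (fun s => ζ (gt s)) := by
      apply ringHom_ext
      · intro a
        simp [hψ, algebraMap_eq]
      · intro s
        simp
    have hBhom : eval₂Hom ψ (fun s : Fin (r+1) => ζ (gt s))
        = (eval₂Hom ψ ![τ * cc, cc]).comp
            ((aeval (mon r) : MvPolynomial (Fin (r+1)) k →ₐ[k]
              MvPolynomial (Fin 2) k) : MvPolynomial (Fin (r+1)) k →+* MvPolynomial (Fin 2) k) := by
      apply ringHom_ext
      · intro a
        simp [hψ, algebraMap_eq]
      · intro s
        rw [eval₂Hom_X']
        rw [hvals s]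
        simp only [RingHom.comp_apply, RingHom.coe_coe, aeval_X]
        rw [show (mon r s : MvPolynomial (Fin 2) k) = X 0 ^ (s:ℕ) * X 1 ^ (r - (s:ℕ)) from rfl]
        rw [map_mul, map_pow, map_pow, eval₂Hom_X', eval₂Hom_X']
        norm_num
    have hfin2 : ζ (aeval gt Q) = (eval₂Hom ψ ![τ * cc, cc]) (aeval (mon r) Q) := by
      have h8 := congrArg (fun (F : MvPolynomial (Fin (r+1)) k →+* L) => F Q) (hAhom.trans hBhom)
      simpa using h8
    rw [hQm, map_zero] at hfin2
    exact hQg (hζinj (by rw [hfin2, map_zero]))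
  · -- main case
    push_neg at hall
    obtain ⟨i2, j2, hne1⟩ := hall
    set u : Fin r → MvPolynomial (Fin 2) k := fun i => gt i.castSucc with hu
    set v : Fin r → MvPolynomial (Fin 2) k := fun i => gt i.succ with hv
    have hinj : ∀ lam : Fin r → k, ∑ i, lam i • u i = 0 → ∑ i, lam i • v i = 0 → lam = 0 := by
      intro lam h1 _
      set lam' : Fin (r+1) → k := fun s => if hs : (s:ℕ) < r then lam ⟨(s:ℕ), hs⟩ else 0 with hlam'
      have h2 : ∑ s : Fin (r+1), lam' s • gt s = 0 := by
        rw [Fin.sum_univ_castSucc]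
        have h3 : lam' (Fin.last r) = 0 := by
          rw [hlam']
          simp
        have h4 : ∀ i : Fin r, lam' i.castSucc = lam i := by
          intro i
          have h5 : ((i.castSucc : Fin (r+1)) : ℕ) = (i : ℕ) := rfl
          show (if hs : ((i.castSucc : Fin (r+1)):ℕ) < r
            then lam ⟨((i.castSucc : Fin (r+1)):ℕ), hs⟩ else 0) = lam i
          rw [dif_pos (h5 ▸ i.isLt)]
          exact congrArg lam (Fin.ext h5)
        rw [h3, zero_smul, add_zero]
        rw [Finset.sum_congr rfl (fun i _ => by rw [h4 i])]
        exact h1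
      have h6 := Fintype.linearIndependent_iff.mp hgtli lam' h2
      funext i
      rw [Pi.zero_apply]
      have h5 : ((i.castSucc : Fin (r+1)) : ℕ) = (i : ℕ) := rfl
      have h7 : lam' i.castSucc = lam i := by
        show (if hs : ((i.castSucc : Fin (r+1)):ℕ) < r
          then lam ⟨((i.castSucc : Fin (r+1)):ℕ), hs⟩ else 0) = lam i
        rw [dif_pos (h5 ▸ i.isLt)]
        exact congrArg lam (Fin.ext h5)
      rw [← h7]
      exact h6 i.castSucc
    have hlemf := lemF r u v hinj ⟨i2, j2, hne1⟩
    have hh0 : h ≠ 0 := by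
      intro hc
      apply hne1
      have h8 := hdvd i2 j2
      rwa [hc, zero_dvd_iff] at h8
    have hmul2 : ∀ (x y : Fin (r+1)), gt x * gt y ∈ homogeneousSubmodule (Fin 2) k (2*r) := by
      intro x y
      rw [mem_homogeneousSubmodule, two_mul]
      exact ((mem_homogeneousSubmodule _ _).mp (hgtmem x)).mul
        ((mem_homogeneousSubmodule _ _).mp (hgtmem y))
    have hd1mem : (gt i2.castSucc * gt j2.succ - gt j2.castSucc * gt i2.succ)
        ∈ homogeneousSubmodule (Fin 2) k (2 * r) :=
      sub_mem (hmul2 _ _) (hmul2 _ _)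
    obtain ⟨q1, hq1⟩ := dvd_exists (hdvd i2 j2)
    have hl2r : ℓ ≤ 2 * r := (homog_div hhdeg hd1mem hq1).2 hne1
    obtain ⟨Ψ, hΨinj⟩ := div_inj h ℓ (2*r) hhdeg hh0 hl2r
    haveI hFDM : FiniteDimensional k
        ((homogeneousSubmodule (Fin 2) k (2*r) ⊓ divSub h) :
          Submodule k (MvPolynomial (Fin 2) k)) :=
      FiniteDimensional.of_injective Ψ hΨinj
    have hSM : Submodule.span k
        (Set.range fun q : Fin r × Fin r => u q.1 * v q.2 - u q.2 * v q.1)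
        ≤ (homogeneousSubmodule (Fin 2) k (2*r) ⊓ divSub h) := by
      rw [Submodule.span_le]
      rintro x ⟨q, rfl⟩
      dsimp only
      refine Submodule.mem_inf.mpr ⟨?_, ?_⟩
      · exact sub_mem (hmul2 _ _) (hmul2 _ _)
      · exact hdvd q.1 q.2
    have h9 : Module.finrank k (Submodule.span k
        (Set.range fun q : Fin r × Fin r => u q.1 * v q.2 - u q.2 * v q.1))
        ≤ Module.finrank k ((homogeneousSubmodule (Fin 2) k (2*r) ⊓ divSub h) :
          Submodule k (MvPolynomial (Fin 2) k)) :=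
      Submodule.finrank_mono hSM
    have h10 : Module.finrank k ((homogeneousSubmodule (Fin 2) k (2*r) ⊓ divSub h) :
        Submodule k (MvPolynomial (Fin 2) k)) ≤ 2*r - ℓ + 1 := by
      have h11 := LinearMap.finrank_le_finrank_of_injective hΨinj
      rwa [Module.finrank_fin_fun] at h11
    omega

/-- two rational normal curves in `P^r` whose scheme-theoretic
intersection is finite meet in a scheme of length at most `r + 2`.

A rational normal curve is the image of `P^1` under the complete degree-`r`
linear system: it is given by a parametrization `i ↦ f i` by `r+1` linearly
independent binary forms of degree `r` (and likewise `g` for the second curve).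
A polynomial `Q` on `P^r` vanishes on the first curve iff `Q(f_0, …, f_r) = 0`.
The intersection being finite means the second curve is not contained in the
first, i.e. some `Q` vanishing on the first curve has `Q(g_0, …, g_r) ≠ 0`
(and symmetrically). A finite subscheme of the second curve is the divisor of a
binary form `h`; it is contained in the first curve iff `h ∣ Q(g_0, …, g_r)`
for every `Q` vanishing on the first curve, and its length is `deg h`. The
claim is that any such `h` has degree at most `r + 2`. -/
theorem statement_12 (k : Type) [Field k] [IsAlgClosed k] (r : ℕ) (hr : 1 ≤ r)
    (f g : Fin (r + 1) → MvPolynomial (Fin 2) k)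
    (hfdeg : ∀ i, f i ∈ homogeneousSubmodule (Fin 2) k r)
    (hgdeg : ∀ i, g i ∈ homogeneousSubmodule (Fin 2) k r)
    (hfind : LinearIndependent k f) (hgind : LinearIndependent k g)
    (hfin : ∃ Q : MvPolynomial (Fin (r + 1)) k, aeval f Q = 0 ∧ aeval g Q ≠ 0)
    (hfin' : ∃ Q : MvPolynomial (Fin (r + 1)) k, aeval g Q = 0 ∧ aeval f Q ≠ 0) :
    ∀ (ℓ : ℕ) (h : MvPolynomial (Fin 2) k),
      h ∈ homogeneousSubmodule (Fin 2) k ℓ →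
      (∀ Q : MvPolynomial (Fin (r + 1)) k, aeval f Q = 0 → h ∣ aeval g Q) →
      ℓ ≤ r + 2 := by
  classical
  intro ℓ h hhdeg hdvd
  -- `f` spans the degree-r forms
  set V := homogeneousSubmodule (Fin 2) k r with hV
  set fV : Fin (r+1) → V := fun i => ⟨f i, hfdeg i⟩ with hfV
  have hfVli : LinearIndependent k fV := by
    apply LinearIndependent.of_comp V.subtype
    exact hfind
  have hspan : Submodule.span k (Set.range fV) = ⊤ :=
    hfVli.span_eq_top_of_card_eq_finrank (by rw [finrank_homog]; simp)
  have hrep : ∀ j : Fin (r+1), ∃ c : Fin (r+1) → k,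
      (mon r j : MvPolynomial (Fin 2) k) = ∑ i, c i • f i := by
    intro j
    have hmonV : (⟨mon r j, mon_mem r j⟩ : V) ∈ Submodule.span k (Set.range fV) := by
      rw [hspan]; trivial
    obtain ⟨c, hc⟩ := (Submodule.mem_span_range_iff_exists_fun k).mp hmonV
    refine ⟨c, ?_⟩
    have h1 := congrArg Subtype.val hc
    simpa using h1.symm
  choose c' hc' using hrep
  set cmat : Fin (r+1) → Fin (r+1) → k := fun s t => coeff (mexp r (t:ℕ)) (f s) with hcmat
  have hcf : ∀ s, f s = ∑ t, cmat s t • mon r t := fun s => repr_mon r (f s) (hfdeg s)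
  -- the delta identity
  have hdelta : ∀ s u', (∑ t, cmat s t * c' t u') = if u' = s then 1 else 0 := by
    intro s u'
    have h1 : f s = ∑ u, (∑ t, cmat s t * c' t u) • f u := by
      rw [hcf s, Finset.sum_congr rfl (fun t _ => by rw [hc' t]), sum_swap_smul]
    have h2 : f s = ∑ u, (if u = s then (1:k) else 0) • f u := by
      rw [Finset.sum_congr rfl (fun u _ => by rw [ite_smul, one_smul, zero_smul]),
        Finset.sum_ite_eq' Finset.univ s f, if_pos (Finset.mem_univ s)]
    have h3 := Fintype.linearIndependent_iff.mp hfind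
      (fun u => (∑ t, cmat s t * c' t u) - (if u = s then 1 else 0)) (by
        rw [Finset.sum_congr rfl (fun u _ => by rw [sub_smul]), Finset.sum_sub_distrib,
          ← h1, ← h2, sub_self])
    have h4 := h3 u'
    exact sub_eq_zero.mp h4
  -- the transformed second curve
  set gt : Fin (r+1) → MvPolynomial (Fin 2) k := fun t => ∑ u', c' t u' • g u' with hgt
  have hgtmem : ∀ t, gt t ∈ homogeneousSubmodule (Fin 2) k r := by
    intro t
    exact Submodule.sum_mem _ (fun u' _ => Submodule.smul_mem _ _ (hgdeg u'))
  have hgtli : LinearIndependent k gt := by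
    rw [Fintype.linearIndependent_iff]
    intro lam hlam
    have hβ : ∀ u', (∑ t, lam t * c' t u') = 0 := by
      apply Fintype.linearIndependent_iff.mp hgind
      rw [← sum_swap_smul]
      exact hlam
    have h4 : ∑ t, lam t • (mon r t : MvPolynomial (Fin 2) k) = 0 := by
      rw [Finset.sum_congr rfl (fun t _ => by rw [hc' t]), sum_swap_smul]
      rw [Finset.sum_congr rfl (fun u _ => by rw [hβ u, zero_smul])]
      exact Finset.sum_const_zero
    exact fun t => Fintype.linearIndependent_iff.mp (mon_li r) lam h4 t
  -- divisibility transfer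
  have hDvd : ∀ i j : Fin r, h ∣ (gt i.castSucc * gt j.succ - gt j.castSucc * gt i.succ) := by
    intro i j
    set Qq : MvPolynomial (Fin (r+1)) k :=
      aeval (R := k) (fun s => ∑ t, C (c' s t) * X t)
        (X i.castSucc * X j.succ - X j.castSucc * X i.succ) with hQq
    have hQf : aeval f Qq = 0 := by
      rw [hQq, aeval_aeval]
      simp only [map_sub, map_mul, aeval_X]
      have h5 : ∀ s, aeval f ((fun s => ∑ t, C (c' s t) * X t) s) = mon r s := by
        intro s
        rw [aeval_linsub r f (c' s), ← hc' s]
      rw [h5, h5, h5, h5]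
      rw [mon_mul_eq r i.castSucc j.succ j.castSucc i.succ (by
        simp [Fin.coe_castSucc, Fin.val_succ]; omega)]
      ring
    have h6 := hdvd Qq hQf
    have h7 : aeval g Qq = gt i.castSucc * gt j.succ - gt j.castSucc * gt i.succ := by
      rw [hQq, aeval_aeval]
      simp only [map_sub, map_mul, aeval_X]
      have h5 : ∀ s, aeval g ((fun s => ∑ t, C (c' s t) * X t) s) = gt s := by
        intro s
        rw [aeval_linsub r g (c' s), hgt]
      rw [h5, h5, h5, h5]
    rwa [h7] at h6
  -- hfin transfer
  obtain ⟨Q, hQf, hQg⟩ := hfin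
  have hQ'm : aeval (mon r (k:=k)) (aeval (R := k) (fun s => ∑ t, C (cmat s t) * X t) Q) = 0 := by
    rw [aeval_aeval]
    have h5 : (fun s => aeval (mon r (k:=k)) ((fun s => ∑ t, C (cmat s t) * X t) s)) = f := by
      funext s
      rw [aeval_linsub r (mon r) (cmat s), ← hcf s]
    rw [h5, hQf]
  have hQ'g : aeval gt (aeval (R := k) (fun s => ∑ t, C (cmat s t) * X t) Q) ≠ 0 := by
    rw [aeval_aeval]
    have h5 : (fun s => aeval gt ((fun s => ∑ t, C (cmat s t) * X t) s)) = g := by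
      funext s
      rw [aeval_linsub r gt (cmat s)]
      have h6 : ∑ t, cmat s t • gt t = ∑ u, (∑ t, cmat s t * c' t u) • g u := by
        rw [hgt, sum_swap_smul]
      rw [h6, Finset.sum_congr rfl (fun u _ => by rw [hdelta s u])]
      rw [Finset.sum_congr rfl (fun u _ => by rw [ite_smul, one_smul, zero_smul]),
        Finset.sum_ite_eq' Finset.univ s g, if_pos (Finset.mem_univ s)]
    rw [h5]
    exact hQg
  exact main_normalized r hr gt hgtmem hgtli
    ⟨aeval (R := k) (fun s => ∑ t, C (cmat s t) * X t) Q, hQ'm, hQ'g⟩ ℓ h hhdeg hDvd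
end

section
/- Over the field k, the ideal I of 2×2 minors of the matrix with rows (x_0, x_1, 0, x_2) and (0, x_0, x_1, x_3) in S = k[x_0,…,x_4] is not linearly presented: the minimal free resolution of I has a first syzygy of degree > 3, i.e., Tor_1^S(I,k) is not concentrated in degree 3. -/
/-!
Let `σ` set `x₀ = x₁ = 0`. Every generator `gᵢ` vanishes under `σ`, so applying `σ ∘ ∂/∂xⱼ`
(`j = 0, 1`) to a syzygy `∑ cᵢ gᵢ = 0` leaves `∑ σ(cᵢ) σ(∂gᵢ/∂xⱼ) = 0`, that is
`σ(c₂) x₃ = σ(c₄) x₂` and `σ(c₄) x₃ = σ(c₅) x₂`. Hence `σ(c₂) x₃² = σ(c₅) x₂²`, so `x₂² ∣ σ(c₂)`,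
which forces `σ(c₂) = 0` when `c₂` has degree `≤ 1`. The condition `σ(c₂) = 0` is `S`-linear, yet
the quadratic syzygy `(0, 0, x₂², 0, x₂x₃, x₃²)` violates it.
-/

open MvPolynomial

/-- The map `S^n → S` sending the standard basis to the family `g`. -/
noncomputable def freeToIdeal {S : Type} [CommRing S] {n : ℕ} (g : Fin n → S) :
    (Fin n → S) →ₗ[S] S where
  toFun c := ∑ i, c i * g i
  map_add' a b := by
    simp [add_mul, Finset.sum_add_distrib]
  map_smul' c a := by
    simp [Finset.mul_sum, smul_eq_mul, mul_assoc]

namespace MvPolynomial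

variable {R σ : Type*} [CommSemiring R]

theorem totalDegree_aeval_le {τ : Type*} {v : σ → MvPolynomial τ R}
    (hv : ∀ i, (v i).totalDegree ≤ 1) (p : MvPolynomial σ R) :
    (aeval v p).totalDegree ≤ p.totalDegree := by
  conv_lhs => rw [p.as_sum, map_sum]
  refine (totalDegree_finsetSum _ _).trans (Finset.sup_le fun m hm => ?_)
  rw [aeval_monomial, algebraMap_eq]
  calc (C (coeff m p) * ∏ i ∈ m.support, v i ^ m i).totalDegree
      ≤ (∏ i ∈ m.support, v i ^ m i).totalDegree := by
        simpa using totalDegree_mul (C (coeff m p)) _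
    _ ≤ ∑ i ∈ m.support, (v i ^ m i).totalDegree := totalDegree_finsetProd _ _
    _ ≤ ∑ i ∈ m.support, m i :=
        Finset.sum_le_sum fun i _ => by
          simpa using (totalDegree_pow _ _).trans (Nat.mul_le_mul_left (m i) (hv i))
    _ ≤ p.totalDegree := le_totalDegree hm

theorem eq_zero_of_mul_X_sq_eq_mul_X_sq [NoZeroDivisors R] {i j : σ} (hij : i ≠ j)
    {p q : MvPolynomial σ R} (hp : p.degreeOf i ≤ 1) (h : p * X j ^ 2 = q * X i ^ 2) :
    p = 0 := by
  nontriviality R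
  by_contra hp0
  have hq : q ≠ 0 := by
    rintro rfl
    exact hp0 (by simpa [X_ne_zero] using h)
  have hdeg := congrArg (degreeOf i) h
  rw [degreeOf_mul_X_pow_of_ne _ hij, degreeOf_mul_X_self_pow_eq_add_of_ne_zero _ _ hq] at hdeg
  omega

theorem sum_map_mul_map_pderiv_eq_zero {ι T : Type*} [Fintype ι] [CommSemiring T]
    (f : MvPolynomial σ R →+* T) {c g : ι → MvPolynomial σ R} (hg : ∀ i, f (g i) = 0)
    (h : ∑ i, c i * g i = 0) (j : σ) : ∑ i, f (c i) * f (pderiv j (g i)) = 0 := by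
  simpa [Derivation.leibniz, hg] using congrArg (f ∘ pderiv j) h

end MvPolynomial

theorem freeToIdeal_apply {S : Type} [CommRing S] {n : ℕ} (g c : Fin n → S) :
    freeToIdeal g c = ∑ i, c i * g i :=
  rfl

section

variable (R : Type) [CommRing R]

noncomputable def minorGens : Fin 6 → MvPolynomial (Fin 5) R :=
  ![X 0 * X 0, X 0 * X 1, X 0 * X 3, X 1 * X 1, X 1 * X 3 - X 0 * X 2, -(X 1 * X 2)]

noncomputable def quadraticSyzygy : Fin 6 → MvPolynomial (Fin 5) R :=
  ![0, 0, X 2 ^ 2, 0, X 2 * X 3, X 3 ^ 2]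

def linearSyzygies : Set (Fin 6 → MvPolynomial (Fin 5) R) :=
  {c | c ∈ LinearMap.ker (freeToIdeal (minorGens R)) ∧ ∀ i, (c i).totalDegree ≤ 1}

noncomputable def evalX₀X₁Zero : MvPolynomial (Fin 5) R →ₐ[R] MvPolynomial (Fin 5) R :=
  aeval ![0, 0, X 2, X 3, X 4]

theorem freeToIdeal_minorGens_quadraticSyzygy :
    freeToIdeal (minorGens R) (quadraticSyzygy R) = 0 := by
  simp only [freeToIdeal_apply, Fin.sum_univ_six, minorGens, quadraticSyzygy, Matrix.cons_val]
  ring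

variable {R}

@[simp]
theorem evalX₀X₁Zero_X (i : Fin 5) : evalX₀X₁Zero R (X i) = ![0, 0, X 2, X 3, X 4] i :=
  aeval_X _ _

theorem evalX₀X₁Zero_minorGens (i : Fin 6) : evalX₀X₁Zero R (minorGens R i) = 0 := by
  fin_cases i <;> simp [minorGens]

theorem evalX₀X₁Zero_two_eq_zero_of_mem_ker [NoZeroDivisors R]
    {c : Fin 6 → MvPolynomial (Fin 5) R} (hc : freeToIdeal (minorGens R) c = 0)
    (hdeg : (c 2).totalDegree ≤ 1) :
    evalX₀X₁Zero R (c 2) = 0 := by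
  rw [freeToIdeal_apply] at hc
  have h₀ : evalX₀X₁Zero R (c 2) * X 3 - evalX₀X₁Zero R (c 4) * X 2 = 0 := by
    simpa [Fin.sum_univ_six, minorGens, pderiv_X, sub_eq_add_neg] using
      sum_map_mul_map_pderiv_eq_zero _ evalX₀X₁Zero_minorGens hc 0
  have h₁ : evalX₀X₁Zero R (c 4) * X 3 - evalX₀X₁Zero R (c 5) * X 2 = 0 := by
    simpa [Fin.sum_univ_six, minorGens, pderiv_X, sub_eq_add_neg] using
      sum_map_mul_map_pderiv_eq_zero _ evalX₀X₁Zero_minorGens hc 1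
  have hdeg₂ : (evalX₀X₁Zero R (c 2)).degreeOf 2 ≤ 1 := by
    have hX (j : Fin 5) : (X j : MvPolynomial (Fin 5) R).totalDegree ≤ 1 :=
      (totalDegree_monomial_le _ _).trans (by simp)
    refine (degreeOf_le_totalDegree _ _).trans ((totalDegree_aeval_le (fun i => ?_) _).trans hdeg)
    fin_cases i <;> simp [hX]
  exact eq_zero_of_mul_X_sq_eq_mul_X_sq (i := 2) (j := 3) (q := evalX₀X₁Zero R (c 5)) (by decide)
    hdeg₂ (by linear_combination (X 3 : MvPolynomial (Fin 5) R) * h₀ + X 2 * h₁)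

theorem quadraticSyzygy_notMem_span_linearSyzygies [IsDomain R] :
    quadraticSyzygy R ∉ Submodule.span (MvPolynomial (Fin 5) R) (linearSyzygies R) := by
  intro hmem
  have hle : Submodule.span (MvPolynomial (Fin 5) R) (linearSyzygies R) ≤
      Submodule.comap (LinearMap.proj 2) (RingHom.ker (evalX₀X₁Zero R)) :=
    Submodule.span_le.mpr fun c ⟨hc, hdeg⟩ => evalX₀X₁Zero_two_eq_zero_of_mem_ker hc (hdeg 2)
  simpa [quadraticSyzygy, X_ne_zero] using hle hmem

end

/-- in `S = k[x_0, …, x_4]`, let `I` be the ideal of 2×2 minors of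
the matrix with rows `(x_0, x_1, 0, x_2)` and `(0, x_0, x_1, x_3)`, with its six
(minimal, quadratic) generators `x_0², x_0x_1, x_0x_3, x_1², x_1x_3 - x_0x_2,
-x_1x_2`. Then `I` is not linearly presented: `Tor_1^S(I,k)` is not concentrated
in degree 3, i.e. the module of syzygies on these generators is not generated by
syzygies whose coefficients are forms of degree `≤ 1`. -/
theorem statement_19 (k : Type) [Field k] :
    letI S := MvPolynomial (Fin 5) k
    letI g : Fin 6 → S :=
      ![X 0 * X 0, X 0 * X 1, X 0 * X 3, X 1 * X 1, X 1 * X 3 - X 0 * X 2, -(X 1 * X 2)]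
    letI φ : (Fin 6 → S) →ₗ[S] S := freeToIdeal g
    Submodule.span S {c : Fin 6 → S | c ∈ LinearMap.ker φ ∧
        ∀ i, (c i).totalDegree ≤ 1}
      ≠ LinearMap.ker φ := by
  show Submodule.span _ (linearSyzygies k) ≠
    LinearMap.ker (freeToIdeal (minorGens k))
  intro heq
  exact quadraticSyzygy_notMem_span_linearSyzygies
    (heq ▸ LinearMap.mem_ker.mpr (freeToIdeal_minorGens_quadraticSyzygy k))
end
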